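/- arXiv:1504.02596 — 8 statements merged into one kernel-verified Lean document; each statement's English description precedes it below -/
import Mathlib

section
/- Let f : ℝ → ℝ be continuous with f(x+1) - f(x) = l for all x, where l is a nonzero integer, let α be irrational, and define T : 𝕋² → 𝕋² by T(x,y) = (x+α, f(x)+y). If f has bounded variation on [0,1], then for all sufficiently small ε > 0 and all n ≥ 1, the maximal cardinality s(n,ε) of an (n,ε)-separated set of (𝕋², T) satisfies s(n,ε) ≤ 20(V+1)n/ε², where V is the total variation of f on [0,1]. -/
/-!
Lift a point of the torus to `(x, y) ∈ [0,1)²`. The `i`-th iterate moves `y` by the Birkhoff sum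
`S_i f(x)` of `f` over the rotation by `α`, and for `x ≤ x'`, `i ≤ n` the increment
`|S_i f(x') - S_i f(x)|` is at most `Φ(x') - Φ(x)`, where `Φ = S_n φ` and `φ` is the variation
function of `f`. Since `f(x+1) - f(x)` is constant, `φ(x+1) = φ(x) + V`, hence
`Φ(1) - Φ(0) = nV`. Two points whose lifts lie in the same cell of the grid cut out by `⌊2y/ε⌋`
and `⌊(x + 2Φ(x))/ε⌋` stay `ε`-close for `n` steps, and there are at most
`(2/ε + 2)((1 + 2nV)/ε + 2)` cells.
-/

open Set

/-- The unit circle `ℝ/ℤ`. -/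
abbrev Torus1 := AddCircle (1:ℝ)

/-- The 2-torus with the max (product) metric. -/
abbrev Torus2 := Torus1 × Torus1

/-- `E` is an `(n, ε)`-separated set for `T`: any two distinct points of `E` are
`ε`-apart in the Bowen metric `d_n`. -/
def IsSeparatedSet (T : Torus2 → Torus2) (n : ℕ) (ε : ℝ) (E : Finset Torus2) : Prop :=
  ∀ p ∈ E, ∀ q ∈ E, p ≠ q → ∃ i < n, ε < dist (T^[i] p) (T^[i] q)

section Variation

variable {f : ℝ → ℝ} {c : ℝ}

theorem eVariationOn_add_const {α E : Type*} [LinearOrder α] [SeminormedAddCommGroup E]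
    (f : α → E) (c : E) (s : Set α) : eVariationOn (fun x => f x + c) s = eVariationOn f s := by
  simp only [eVariationOn, edist_add_right]

theorem eVariationOn_Icc_add_intCast (hf : ∀ x, f (x + 1) - f x = c) (k : ℤ) (a b : ℝ) :
    eVariationOn f (Icc (a + k) (b + k)) = eVariationOn f (Icc a b) := by
  have hper : Function.Periodic (fun x => f x - c * x) 1 := fun x => by linarith [hf x]
  have hshift : (fun x => f (x + k)) = fun x => f x + c * k := funext fun x => by
    have h := hper.int_mul k x
    simp only [mul_one] at h
    linear_combination h
  rw [← image_add_const_Icc,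
    ← eVariationOn.comp_eq_of_monotoneOn f (· + (k : ℝ))
    (fun _ _ _ _ h => add_le_add_left h _)]
  exact (congrArg (eVariationOn · _) hshift).trans (eVariationOn_add_const f _ _)

theorem eVariationOn_Icc_zero_natCast (hf : ∀ x, f (x + 1) - f x = c) (N : ℕ) :
    eVariationOn f (Icc 0 N) = N * eVariationOn f (Icc 0 1) := by
  have hsum := eVariationOn.sum' f (I := (Nat.cast : ℕ → ℝ)) Nat.mono_cast (n := N)
  rw [Nat.cast_zero] at hsum
  rw [← hsum, Finset.sum_congr rfl fun i _ => ?_, Finset.sum_const, Finset.card_range,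
    nsmul_eq_mul]
  simpa [add_comm] using eVariationOn_Icc_add_intCast hf i 0 1

theorem locallyBoundedVariationOn_univ_of_add_one (hf : ∀ x, f (x + 1) - f x = c)
    (hbv : BoundedVariationOn f (Icc 0 1)) : LocallyBoundedVariationOn f univ := by
  intro a b _ _
  have hsub : univ ∩ Icc a b ⊆ Icc (0 + (⌊a⌋ : ℝ)) (⌈b - ⌊a⌋⌉₊ + ⌊a⌋) := by
    rw [univ_inter, zero_add]
    exact Icc_subset_Icc (Int.floor_le a) (by linarith [Nat.le_ceil (b - ⌊a⌋)])
  refine ne_top_of_le_ne_top ?_ (eVariationOn.mono f hsub)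
  rw [eVariationOn_Icc_add_intCast hf, eVariationOn_Icc_zero_natCast hf]
  exact ENNReal.mul_ne_top (ENNReal.natCast_ne_top _) hbv

theorem variationOnFromTo_univ_add_one (hf : ∀ x, f (x + 1) - f x = c) (a b : ℝ) :
    variationOnFromTo f univ (a + 1) (b + 1) = variationOnFromTo f univ a b := by
  have hshift : ∀ a b : ℝ,
      eVariationOn f (univ ∩ Icc (a + 1) (b + 1)) = eVariationOn f (univ ∩ Icc a b) :=
    fun a b => by simpa using eVariationOn_Icc_add_intCast hf 1 a b
  rcases le_total a b with h | h
  · rw [variationOnFromTo.eq_of_le _ _ h, variationOnFromTo.eq_of_le _ _ (by linarith), hshift]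
  · rw [variationOnFromTo.eq_of_ge _ _ h, variationOnFromTo.eq_of_ge _ _ (by linarith), hshift]

theorem variationOnFromTo_univ_zero_add_one (hf : ∀ x, f (x + 1) - f x = c)
    (hbv : BoundedVariationOn f (Icc 0 1)) (x : ℝ) :
    variationOnFromTo f univ 0 (x + 1) =
      variationOnFromTo f univ 0 x + (eVariationOn f (Icc 0 1)).toReal := by
  rw [← variationOnFromTo.add (locallyBoundedVariationOn_univ_of_add_one hf hbv) (mem_univ 0)
    (mem_univ 1) (mem_univ _), variationOnFromTo.eq_of_le _ _ zero_le_one, univ_inter, add_comm]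
  congr 1
  simpa using variationOnFromTo_univ_add_one hf 0 x

end Variation

section Birkhoff

theorem abs_birkhoffSum_sub_le {α : Type*} [Preorder α] {g : α → α} (hg : Monotone g)
    {f φ : α → ℝ} (hfφ : ∀ x y, x ≤ y → |f y - f x| ≤ φ y - φ x) {i n : ℕ} (hin : i ≤ n)
    {x y : α} (hxy : x ≤ y) :
    |birkhoffSum g f i y - birkhoffSum g f i x| ≤ birkhoffSum g φ n y - birkhoffSum g φ n x := by
  have hk : ∀ k, |f (g^[k] y) - f (g^[k] x)| ≤ φ (g^[k] y) - φ (g^[k] x) :=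
    fun k => hfφ _ _ (hg.iterate k hxy)
  simp only [birkhoffSum, ← Finset.sum_sub_distrib]
  calc |∑ k ∈ Finset.range i, (f (g^[k] y) - f (g^[k] x))|
      ≤ ∑ k ∈ Finset.range i, |f (g^[k] y) - f (g^[k] x)| := Finset.abs_sum_le_sum_abs _ _
    _ ≤ ∑ k ∈ Finset.range i, (φ (g^[k] y) - φ (g^[k] x)) := Finset.sum_le_sum fun k _ => hk k
    _ ≤ ∑ k ∈ Finset.range n, (φ (g^[k] y) - φ (g^[k] x)) :=
      Finset.sum_le_sum_of_subset_of_nonneg (Finset.range_subset_range.2 hin)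
        fun k _ _ => (abs_nonneg _).trans (hk k)

theorem Monotone.birkhoffSum {α M : Type*} [Preorder α] [AddCommMonoid M] [PartialOrder M]
    [IsOrderedAddMonoid M] {g : α → α} (hg : Monotone g) {φ : α → M} (hφ : Monotone φ) (n : ℕ) :
    Monotone (birkhoffSum g φ n) := fun _ _ hxy =>
  Finset.sum_le_sum fun k _ => hφ (hg.iterate k hxy)

theorem Function.Commute.birkhoffSum_apply_eq_add_nsmul {α M : Type*} [AddCommMonoid M]
    {g h : α → α} (hgh : Function.Commute g h) {φ : α → M} {V : M} (hφ : ∀ x, φ (h x) = φ x + V)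
    (n : ℕ) (x : α) : birkhoffSum g φ n (h x) = birkhoffSum g φ n x + n • V := by
  simp only [birkhoffSum, fun k => (hgh.iterate_left k).eq x, hφ, Finset.sum_add_distrib,
    Finset.sum_const, Finset.card_range]

end Birkhoff

theorem AddCircle.dist_coe_le {p : ℝ} (x y : ℝ) : dist (x : AddCircle p) y ≤ |x - y| := by
  rw [dist_eq_norm, ← AddCircle.coe_sub]
  exact QuotientAddGroup.norm_mk_le_norm

theorem card_Icc_floor_floor_le {a b : ℝ} (hab : a ≤ b) :
    ((Finset.Icc ⌊a⌋ ⌊b⌋).card : ℝ) ≤ b - a + 2 := by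
  have hfloor : ⌊a⌋ ≤ ⌊b⌋ := Int.floor_le_floor hab
  rw [Int.card_Icc, ← Int.cast_natCast, Int.toNat_of_nonneg (by omega)]
  push_cast
  linarith [Int.floor_le b, Int.sub_one_lt_floor a]

theorem Finset.card_le_of_injOn_floor {ι : Type*} {s : Finset ι} {u v : ι → ℝ} {a b c d : ℝ}
    (hab : a ≤ b) (hcd : c ≤ d) (hu : ∀ i ∈ s, u i ∈ Set.Icc a b) (hv : ∀ i ∈ s, v i ∈ Set.Icc c d)
    (hinj : InjOn (fun i => (⌊u i⌋, ⌊v i⌋)) s) :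
    (s.card : ℝ) ≤ (b - a + 2) * (d - c + 2) := by
  have hmaps : ∀ i ∈ s, (⌊u i⌋, ⌊v i⌋) ∈ Finset.Icc ⌊a⌋ ⌊b⌋ ×ˢ Finset.Icc ⌊c⌋ ⌊d⌋ := fun i hi => by
    simp only [Finset.mem_product, Finset.mem_Icc]
    exact ⟨⟨Int.floor_le_floor (hu i hi).1, Int.floor_le_floor (hu i hi).2⟩,
      ⟨Int.floor_le_floor (hv i hi).1, Int.floor_le_floor (hv i hi).2⟩⟩
  calc (s.card : ℝ) ≤ ((Finset.Icc ⌊a⌋ ⌊b⌋ ×ˢ Finset.Icc ⌊c⌋ ⌊d⌋).card : ℝ) := by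
        exact_mod_cast Finset.card_le_card_of_injOn _ hmaps hinj
    _ ≤ (b - a + 2) * (d - c + 2) := by
        rw [Finset.card_product, Nat.cast_mul]
        exact mul_le_mul (card_Icc_floor_floor_le hab) (card_Icc_floor_floor_le hcd)
          (Nat.cast_nonneg _) (by linarith)

section SkewProduct

variable {α : ℝ} {f : ℝ → ℝ} {F : Torus1 → Torus1} {T : Torus2 → Torus2}

theorem iterate_skewProduct_coe (hF : ∀ x : ℝ, F x = f x)
    (hT : ∀ p : Torus2, T p = (p.1 + α, F p.1 + p.2)) (i : ℕ) (x y : ℝ) :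
    T^[i] (x, y) = (↑(x + i • α), ↑(y + birkhoffSum (· + α) f i x)) := by
  induction i with
  | zero => simp
  | succ i ih =>
    rw [Function.iterate_succ_apply', ih, hT, hF, birkhoffSum_succ, add_right_iterate_apply,
      succ_nsmul]
    simp only [Prod.mk.injEq, ← AddCircle.coe_add]
    constructor <;> congr 1 <;> ring

theorem dist_iterate_skewProduct_coe_lt (hF : ∀ x : ℝ, F x = f x)
    (hT : ∀ p : Torus2, T p = (p.1 + α, F p.1 + p.2)) {φ : ℝ → ℝ}
    (hfφ : ∀ x y, x ≤ y → |f y - f x| ≤ φ y - φ x) {ε : ℝ} {i n : ℕ} (hin : i ≤ n)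
    {x x' y y' : ℝ} (hx : x ≤ x')
    (hxε : x' - x + 2 * (birkhoffSum (· + α) φ n x' - birkhoffSum (· + α) φ n x) < ε)
    (hyε : 2 * |y' - y| < ε) :
    dist (T^[i] (x, y)) (T^[i] (x', y')) < ε := by
  have hS := abs_birkhoffSum_sub_le (g := (· + α)) (fun _ _ h => add_le_add_left h _) hfφ hin hx
  have hS0 := (abs_nonneg _).trans hS
  rw [iterate_skewProduct_coe hF hT, iterate_skewProduct_coe hF hT, Prod.dist_eq, max_lt_iff]
  constructor
  · calc dist _ _ ≤ |x + i • α - (x' + i • α)| := AddCircle.dist_coe_le _ _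
      _ = x' - x := by
        rw [abs_sub_comm, add_sub_add_right_eq_sub, abs_of_nonneg (sub_nonneg.2 hx)]
      _ < ε := by linarith
  · calc dist _ _ ≤ |y + birkhoffSum (· + α) f i x - (y' + birkhoffSum (· + α) f i x')| :=
          AddCircle.dist_coe_le _ _
      _ = |(y' - y) + (birkhoffSum (· + α) f i x' - birkhoffSum (· + α) f i x)| := by
        rw [abs_sub_comm, add_sub_add_comm]
      _ ≤ |y' - y| + |birkhoffSum (· + α) f i x' - birkhoffSum (· + α) f i x| := abs_add_le _ _
      _ < ε := by linarith

theorem IsSeparatedSet.injOn_floor (hF : ∀ x : ℝ, F x = f x)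
    (hT : ∀ p : Torus2, T p = (p.1 + α, F p.1 + p.2)) {φ : ℝ → ℝ}
    (hfφ : ∀ x y, x ≤ y → |f y - f x| ≤ φ y - φ x) {ε : ℝ} (hε : 0 < ε) {n : ℕ}
    {E : Finset Torus2} (hE : IsSeparatedSet T n ε E) {x y : Torus2 → ℝ}
    (hxy : ∀ p, ((x p : Torus1), (y p : Torus1)) = p) :
    InjOn (fun p => (⌊2 * y p / ε⌋, ⌊(x p + 2 * birkhoffSum (· + α) φ n (x p)) / ε⌋)) E := by
  have hclose : ∀ p q, x p ≤ x q → ⌊2 * y p / ε⌋ = ⌊2 * y q / ε⌋ →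
      ⌊(x p + 2 * birkhoffSum (· + α) φ n (x p)) / ε⌋ =
        ⌊(x q + 2 * birkhoffSum (· + α) φ n (x q)) / ε⌋ →
      ∀ i < n, dist (T^[i] p) (T^[i] q) < ε := by
    intro p q hle hrow hcol i hi
    rw [← hxy p, ← hxy q]
    refine dist_iterate_skewProduct_coe_lt hF hT hfφ hi.le hle ?_ ?_
    · have h := (abs_sub_lt_iff.1 (Int.abs_sub_lt_one_of_floor_eq_floor hcol)).2
      rw [← sub_div, div_lt_one hε] at h
      linarith
    · have h := Int.abs_sub_lt_one_of_floor_eq_floor hrow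
      rwa [← sub_div, abs_div, abs_of_pos hε, div_lt_one hε, ← mul_sub, abs_mul, abs_two,
        abs_sub_comm] at h
  intro p hp q hq hpq
  simp only [Prod.mk.injEq] at hpq
  by_contra hne
  obtain ⟨i, hi, hsep⟩ := hE p hp q hq hne
  rcases le_total (x p) (x q) with h | h
  · exact (hclose p q h hpq.1 hpq.2 i hi).not_gt hsep
  · rw [dist_comm] at hsep
    exact (hclose q p h hpq.1.symm hpq.2.symm i hi).not_gt hsep

theorem IsSeparatedSet.card_le (hF : ∀ x : ℝ, F x = f x)
    (hT : ∀ p : Torus2, T p = (p.1 + α, F p.1 + p.2)) {φ : ℝ → ℝ}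
    (hfφ : ∀ x y, x ≤ y → |f y - f x| ≤ φ y - φ x) {V : ℝ} (hφ : ∀ x, φ (x + 1) = φ x + V)
    {ε : ℝ} (hε : 0 < ε) {n : ℕ} {E : Finset Torus2} (hE : IsSeparatedSet T n ε E) :
    (E.card : ℝ) ≤ (2 / ε + 2) * ((1 + 2 * n * V) / ε + 2) := by
  set Φ := birkhoffSum (· + α) φ n
  have hΦ_mono : Monotone Φ := Monotone.birkhoffSum (fun _ _ h => add_le_add_left h α)
    (fun s t hst => sub_nonneg.1 ((abs_nonneg _).trans (hfφ s t hst))) n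
  have hG : Monotone fun t => (t + 2 * Φ t) / ε := fun s t hst => by
    have := hΦ_mono hst
    dsimp only
    gcongr
  have hΦ_one : Φ 1 = Φ 0 + n * V := by
    simpa using (Function.Commute.birkhoffSum_apply_eq_add_nsmul
      (show Function.Commute (· + α) (· + 1) from fun x => add_right_comm x 1 α) hφ n 0)
  choose x hx hpx using fun p : Torus2 => AddCircle.eq_coe_Ico p.1
  choose y hy hpy using fun p : Torus2 => AddCircle.eq_coe_Ico p.2
  have hcard := Finset.card_le_of_injOn_floor (by positivity : (0 : ℝ) ≤ 2 / ε) (hG zero_le_one)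
    (fun p _ => ⟨by have := (hy p).1; positivity, by gcongr; linarith [(hy p).2]⟩)
    (fun p _ => ⟨hG (hx p).1, hG (hx p).2.le⟩)
    (hE.injOn_floor hF hT hfφ hε fun p => Prod.ext (hpx p) (hpy p))
  have hG_diff : (1 + 2 * Φ 1) / ε - (0 + 2 * Φ 0) / ε = (1 + 2 * n * V) / ε := by
    rw [hΦ_one]
    ring
  rwa [sub_zero, hG_diff] at hcard

end SkewProduct

theorem stmt1_general (l : ℤ) (α : ℝ)
    (f : ℝ → ℝ) (hfl : ∀ x : ℝ, f (x + 1) - f x = l)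
    (hbv : BoundedVariationOn f (Icc (0:ℝ) 1))
    (V : ℝ) (hV : V = (eVariationOn f (Icc (0:ℝ) 1)).toReal)
    (F : Torus1 → Torus1) (hF : ∀ x : ℝ, F (x : Torus1) = ((f x : ℝ) : Torus1))
    (T : Torus2 → Torus2)
    (hT : ∀ p : Torus2, T p = (p.1 + (α : Torus1), F p.1 + p.2)) :
    ∃ ε₀ > 0, ∀ ε, 0 < ε → ε ≤ ε₀ → ∀ n : ℕ, 1 ≤ n →
      ∀ E : Finset Torus2, IsSeparatedSet T n ε E →
        (E.card : ℝ) ≤ 20 * (V + 1) * n / ε ^ 2 := by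
  refine ⟨1, one_pos, fun ε hε hε1 n hn E hE => ?_⟩
  have hloc := locallyBoundedVariationOn_univ_of_add_one hfl hbv
  have hcard := hE.card_le hF hT (φ := variationOnFromTo f univ 0)
    (fun x y hxy => variationOnFromTo.abs_sub_le_sub_of_le hloc (mem_univ 0) (mem_univ x)
      (mem_univ y) hxy)
    (hV ▸ variationOnFromTo_univ_zero_add_one hfl hbv) hε
  have hV0 : 0 ≤ V := hV ▸ ENNReal.toReal_nonneg
  have h2ε : 2 ≤ 2 / ε := by rw [le_div_iff₀ hε]; linarith
  have hn' : (1 : ℝ) ≤ n := by exact_mod_cast hn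
  calc (E.card : ℝ) ≤ (2 / ε + 2) * ((1 + 2 * n * V) / ε + 2) := hcard
    _ ≤ (2 / ε + 2 / ε) * ((1 + 2 * n * V) / ε + 2 / ε) := by gcongr
    _ = 4 * (3 + 2 * n * V) / ε ^ 2 := by field_simp; ring
    _ ≤ 20 * (V + 1) * n / ε ^ 2 := by gcongr ?_ / _; nlinarith

theorem stmt1 (l : ℤ) (hl : l ≠ 0) (α : ℝ) (hα : Irrational α)
    (f : ℝ → ℝ) (hf : Continuous f) (hfl : ∀ x : ℝ, f (x + 1) - f x = l)
    (hbv : BoundedVariationOn f (Icc (0:ℝ) 1))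
    (V : ℝ) (hV : V = (eVariationOn f (Icc (0:ℝ) 1)).toReal)
    (F : Torus1 → Torus1) (hF : ∀ x : ℝ, F (x : Torus1) = ((f x : ℝ) : Torus1))
    (T : Torus2 → Torus2)
    (hT : ∀ p : Torus2, T p = (p.1 + (α : Torus1), F p.1 + p.2)) :
    ∃ ε₀ > 0, ∀ ε, 0 < ε → ε ≤ ε₀ → ∀ n : ℕ, 1 ≤ n →
      ∀ E : Finset Torus2, IsSeparatedSet T n ε E →
        (E.card : ℝ) ≤ 20 * (V + 1) * n / ε ^ 2 :=
  stmt1_general l α f hfl hbv V hV F hF T hT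
end

section
/- Let f : ℝ → ℝ be continuous with f(x+1) - f(x) = l for all x, where l is a nonzero integer, let α be irrational, and define T : 𝕋² → 𝕋² by T(x,y) = (x+α, f(x)+y). Then for all sufficiently small ε > 0 and all n ≥ 1, the maximal cardinality s(n,ε) of an (n,ε)-separated set satisfies s(n,ε) ≥ n|l| / (3(ε + η(ε))), where η(ε) = sup{|f(x)-f(y)| : |x-y| ≤ ε}. -/
open Set

/-- The modulus of continuity `η(ε) = sup {|f x - f y| : |x - y| ≤ ε}`. -/
noncomputable def modCont (f : ℝ → ℝ) (ε : ℝ) : ℝ :=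
  sSup {d : ℝ | ∃ x y : ℝ, |x - y| ≤ ε ∧ d = |f x - f y|}

/-! For `n = 1` a square grid of mesh just above `ε` is `(1, ε)`-separated. For `n = N + 1 ≥ 2`
let `u = S_N f` be the Birkhoff sum of `f` along `x ↦ x + α`; then `u (x + 1) = u x + N l`, so by
the intermediate value theorem there are about `N |l| / ε` points `xⱼ ∈ [0, 1]` whose values
`u xⱼ` are more than `ε` apart modulo `N l`. If two of the points `(xᵢ, 0)`, `(xⱼ, 0)` are not
`ε`-apart, `xᵢ` is within `ε` of a lift `xⱼ + k`; the difference `S_t xᵢ - S_t (xⱼ + k)` of the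
second coordinates of their orbits starts at `0`, moves by at most `η(ε)` per step and exceeds `ε`
at `t = N`, so the first time it exceeds `ε` it is at most `ε + η(ε) ≤ 1/2`, and hence equal to the
distance on the circle. Both constructions give at least `n |l| / (3 ε)` points. -/

section Shift

variable {f : ℝ → ℝ} {c : ℝ}

lemma periodic_sub_mul_of_add_one_sub (hfc : ∀ x, f (x + 1) - f x = c) :
    Function.Periodic (fun x => f x - c * x) 1 := fun x => by
  simp only
  linear_combination hfc x

lemma apply_add_intCast_of_add_one_sub (hfc : ∀ x, f (x + 1) - f x = c) (x : ℝ) (k : ℤ) :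
    f (x + k) = f x + k * c := by
  have h := (periodic_sub_mul_of_add_one_sub hfc).int_mul k x
  simp only [mul_one] at h
  linear_combination h

lemma Function.Periodic.uniformContinuous_of_continuous {g : ℝ → ℝ} {p : ℝ} [Fact (0 < p)]
    (hg : Function.Periodic g p) (hc : Continuous g) : UniformContinuous g := by
  have hlift : Continuous hg.lift := continuous_quot_lift _ hc
  have hmk : UniformContinuous (QuotientAddGroup.mk' (AddSubgroup.zmultiples p)) :=
    uniformContinuous_addMonoidHom_of_continuous continuous_quot_mk
  exact (CompactSpace.uniformContinuous_of_continuous hlift).comp hmk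

lemma uniformContinuous_of_add_one_sub (hf : Continuous f) (hfc : ∀ x, f (x + 1) - f x = c) :
    UniformContinuous f := by
  have hg := (periodic_sub_mul_of_add_one_sub hfc).uniformContinuous_of_continuous (by fun_prop)
  simpa using hg.add (uniformContinuous_id.const_mul' c)

lemma birkhoffSum_add_right_add_intCast (hfc : ∀ x, f (x + 1) - f x = c) (α : ℝ) (t : ℕ)
    (x : ℝ) (k : ℤ) :
    birkhoffSum (· + α) f t (x + k) = birkhoffSum (· + α) f t x + t * (k * c) := by
  simp only [birkhoffSum, add_right_iterate_apply, add_right_comm x (k : ℝ),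
    apply_add_intCast_of_add_one_sub hfc, Finset.sum_add_distrib, Finset.sum_const,
    Finset.card_range, nsmul_eq_mul]

end Shift

lemma continuous_birkhoffSum {X : Type*} [TopologicalSpace X] {φ : X → X} {g : X → ℝ}
    (hφ : Continuous φ) (hg : Continuous g) (t : ℕ) : Continuous (birkhoffSum φ g t) :=
  continuous_finsetSum _ fun i _ => hg.comp (hφ.iterate i)

lemma modCont_nonneg {f : ℝ → ℝ} {ε δ : ℝ} (hδ : ∀ x y, |x - y| ≤ ε → |f x - f y| ≤ δ)
    (hε : 0 ≤ ε) : 0 ≤ modCont f ε := by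
  have hbdd : BddAbove {d : ℝ | ∃ x y : ℝ, |x - y| ≤ ε ∧ d = |f x - f y|} :=
    ⟨δ, by rintro _ ⟨x, y, hxy, rfl⟩; exact hδ x y hxy⟩
  have h := le_csSup hbdd ⟨0, 0, by simpa using hε, rfl⟩
  simpa [modCont] using h

lemma exists_natCast_mem_Ico {x : ℝ} (hx : 0 < x) : ∃ M : ℕ, (M : ℝ) ∈ Ico (x - 1) x := by
  refine ⟨⌈x⌉₊ - 1, ?_⟩
  rw [Nat.cast_sub (Nat.one_le_iff_ne_zero.2 (Nat.ceil_pos.2 hx).ne'), Nat.cast_one]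
  exact ⟨by linarith [Nat.le_ceil x], by linarith [Nat.ceil_lt_add_one hx.le]⟩

lemma inv_le_abs_sub_div_sub_intCast {M i j : ℕ} (hi : i < M) (hj : j < M) (hij : i ≠ j)
    (k : ℤ) : (M : ℝ)⁻¹ ≤ |((i : ℝ) - j) / M - k| := by
  have hM : (0 : ℝ) < M := by exact_mod_cast hi.pos
  have hne : (i : ℤ) - j - k * M ≠ 0 := by
    intro h
    rcases lt_trichotomy k 0 with hk | rfl | hk
    · nlinarith
    · omega
    · nlinarith
  have hdiv : ((i : ℝ) - j) / M - k = (((i : ℤ) - j - k * M : ℤ) : ℝ) / M := by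
    push_cast
    field_simp
  rw [hdiv, abs_div, abs_of_pos hM, ← one_div]
  gcongr
  exact_mod_cast Int.one_le_abs hne

lemma exists_eq_add_mul_of_apply_one {u : ℝ → ℝ} {w s : ℝ} (hu : Continuous u)
    (h1 : u 1 = u 0 + w) (hs : s ∈ Icc (0 : ℝ) 1) : ∃ x, u x = u 0 + s * w := by
  obtain ⟨hs0, hs1⟩ := hs
  have hmem : u 0 + s * w ∈ uIcc (u 0) (u 1) := by
    rw [h1]
    rcases le_total 0 w with hw | hw
    · exact Set.mem_uIcc_of_le (by nlinarith) (by nlinarith)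
    · exact Set.mem_uIcc_of_ge (by nlinarith) (by nlinarith)
  obtain ⟨x, -, hx⟩ := intermediate_value_uIcc hu.continuousOn hmem
  exact ⟨x, hx⟩

lemma exists_abs_mem_Ioc_of_abs_sub_le {d : ℕ → ℝ} {ε η : ℝ} (h0 : |d 0| ≤ ε)
    (hstep : ∀ t, |d (t + 1) - d t| ≤ η) :
    ∀ {N : ℕ}, ε < |d N| → ∃ t ≤ N, |d t| ∈ Ioc ε (ε + η)
  | 0, hN => absurd h0 hN.not_ge
  | N + 1, hN => by
    by_cases hd : ε < |d N|
    · obtain ⟨t, ht, hdt⟩ := exists_abs_mem_Ioc_of_abs_sub_le h0 hstep hd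
      exact ⟨t, ht.trans N.le_succ, hdt⟩
    · refine ⟨N + 1, le_rfl, hN, ?_⟩
      linarith [abs_sub_abs_le_abs_sub (d (N + 1)) (d N), hstep N]

lemma lt_dist_coe_iff {ε a b : ℝ} :
    ε < dist (a : Torus1) (b : Torus1) ↔ ∀ k : ℤ, ε < |a - b - k| := by
  rw [dist_eq_norm, ← AddCircle.coe_sub, UnitAddCircle.norm_eq]
  exact ⟨fun h k => h.trans_le (round_le _ k), fun h => h _⟩

lemma dist_coe_eq_abs {a b : ℝ} (h : |a - b| ≤ 1 / 2) :
    dist (a : Torus1) (b : Torus1) = |a - b| := by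
  rw [dist_eq_norm, ← AddCircle.coe_sub, AddCircle.norm_coe_eq_abs_iff _ one_ne_zero]
  simpa using h

lemma exists_isSeparatedSet_card_eq {ι : Type*} {T : Torus2 → Torus2} {n : ℕ} {ε : ℝ}
    (hε : 0 ≤ ε) (s : Finset ι) (ψ : ι → Torus2)
    (hψ : ∀ i ∈ s, ∀ j ∈ s, i ≠ j → ∃ t < n, ε < dist (T^[t] (ψ i)) (T^[t] (ψ j))) :
    ∃ E, IsSeparatedSet T n ε E ∧ E.card = s.card := by
  classical
  have hinj : Set.InjOn ψ s := fun i hi j hj hij => by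
    by_contra hne
    obtain ⟨t, -, ht⟩ := hψ i hi j hj hne
    rw [hij, dist_self] at ht
    linarith
  refine ⟨s.image ψ, ?_, Finset.card_image_of_injOn hinj⟩
  simp only [IsSeparatedSet, Finset.forall_mem_image]
  exact fun i hi j hj hij => hψ i hi j hj fun h => hij (h ▸ rfl)

lemma exists_isSeparatedSet_grid (T : Torus2 → Torus2) {n : ℕ} (hn : 0 < n) {ε : ℝ}
    (hε : 0 < ε) (hε1 : ε ≤ 1) : ∃ E, IsSeparatedSet T n ε E ∧ (1 / ε - 1) ^ 2 ≤ E.card := by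
  obtain ⟨m, hm1, hm2⟩ := exists_natCast_mem_Ico (one_div_pos.2 hε)
  have hspacing : ∀ i < m, ∀ j < m, i ≠ j →
      ε < dist (((i / m : ℝ)) : Torus1) (((j / m : ℝ)) : Torus1) := by
    intro i hi j hj hij
    have hm : (0 : ℝ) < m := by exact_mod_cast hi.pos
    refine lt_dist_coe_iff.2 fun k => ?_
    rw [← sub_div]
    refine lt_of_lt_of_le ?_ (inv_le_abs_sub_div_sub_intCast hi hj hij k)
    rwa [lt_inv_comm₀ hε hm, ← one_div]
  obtain ⟨E, hE, hcard⟩ := exists_isSeparatedSet_card_eq (T := T) (n := n) hε.le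
    (Finset.range m ×ˢ Finset.range m)
    (fun p => (((p.1 / m : ℝ) : Torus1), ((p.2 / m : ℝ) : Torus1)))
    (by
      rintro ⟨i, j⟩ hij ⟨i', j'⟩ hij' hne
      simp only [Finset.mem_product, Finset.mem_range] at hij hij'
      refine ⟨0, hn, ?_⟩
      rw [Function.iterate_zero_apply, Function.iterate_zero_apply, Prod.dist_eq]
      by_cases hi : i = i'
      · subst hi
        exact (hspacing j hij.2 j' hij'.2 fun h => hne (h ▸ rfl)).trans_le (le_max_right _ _)
      · exact (hspacing i hij.1 i' hij'.1 hi).trans_le (le_max_left _ _))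
  refine ⟨E, hE, ?_⟩
  rw [hcard, Finset.card_product, Finset.card_range, Nat.cast_mul, ← sq]
  have : 0 ≤ 1 / ε - 1 := by rw [sub_nonneg, le_div_iff₀ hε]; linarith
  exact pow_le_pow_left₀ this hm1 2

section SkewProduct

variable {α : ℝ} {f : ℝ → ℝ} {F : Torus1 → Torus1} {T : Torus2 → Torus2}

lemma iterate_coe_mk (hF : ∀ x : ℝ, F (x : Torus1) = ((f x : ℝ) : Torus1))
    (hT : ∀ p : Torus2, T p = (p.1 + (α : Torus1), F p.1 + p.2)) (x c : ℝ) :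
    ∀ t : ℕ, T^[t] ((x : Torus1), (c : Torus1)) =
      (((x + t * α : ℝ) : Torus1), ((birkhoffSum (· + α) f t x + c : ℝ) : Torus1))
  | 0 => by simp
  | t + 1 => by
    rw [Function.iterate_succ_apply', iterate_coe_mk hF hT x c t, hT, hF, birkhoffSum_succ,
      add_right_iterate_apply, nsmul_eq_mul]
    ext <;> simp only [← AddCircle.coe_add] <;> push_cast <;> ring_nf

lemma exists_lt_dist_iterate_of_lt_abs_birkhoffSum
    (hF : ∀ x : ℝ, F (x : Torus1) = ((f x : ℝ) : Torus1))
    (hT : ∀ p : Torus2, T p = (p.1 + (α : Torus1), F p.1 + p.2))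
    {ε η : ℝ} (hεη : ε + η ≤ 1 / 2) (hfη : ∀ x y, |x - y| ≤ ε → |f x - f y| ≤ η)
    {a b : ℝ} (hab : |a - b| ≤ ε) {N : ℕ}
    (hN : ε < |birkhoffSum (· + α) f N a - birkhoffSum (· + α) f N b|) :
    ∃ t ≤ N, ε < dist (T^[t] ((a : Torus1), 0)) (T^[t] ((b : Torus1), 0)) := by
  set d : ℕ → ℝ := fun t => birkhoffSum (· + α) f t a - birkhoffSum (· + α) f t b
  have h0 : |d 0| ≤ ε := by simpa [d] using (abs_nonneg _).trans hab
  have hstep : ∀ t, |d (t + 1) - d t| ≤ η := fun t => by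
    simp only [d, birkhoffSum_succ, add_right_iterate_apply]
    convert hfη (a + t • α) (b + t • α) (by simpa using hab) using 2
    ring
  obtain ⟨t, ht, hdt⟩ := exists_abs_mem_Ioc_of_abs_sub_le h0 hstep hN
  refine ⟨t, ht, hdt.1.trans_le ?_⟩
  rw [← AddCircle.coe_zero, iterate_coe_mk hF hT, iterate_coe_mk hF hT, Prod.dist_eq]
  refine le_max_of_le_right ?_
  rw [add_zero, add_zero, dist_coe_eq_abs (hdt.2.trans hεη)]

lemma exists_lt_dist_iterate_of_forall_lt_abs_birkhoffSum_sub
    (hF : ∀ x : ℝ, F (x : Torus1) = ((f x : ℝ) : Torus1))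
    (hT : ∀ p : Torus2, T p = (p.1 + (α : Torus1), F p.1 + p.2))
    {ε η : ℝ} (hεη : ε + η ≤ 1 / 2) (hfη : ∀ x y, |x - y| ≤ ε → |f x - f y| ≤ η)
    {a b : ℝ} {N : ℕ}
    (hab : ∀ k : ℤ, ε < |birkhoffSum (· + α) f N a - birkhoffSum (· + α) f N (b + k)|) :
    ∃ t < N + 1, ε < dist (T^[t] ((a : Torus1), 0)) (T^[t] ((b : Torus1), 0)) := by
  by_cases hfar : ∀ k : ℤ, ε < |a - b - k|
  · refine ⟨0, N.succ_pos, ?_⟩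
    rw [Function.iterate_zero_apply, Function.iterate_zero_apply, Prod.dist_eq]
    exact (lt_dist_coe_iff.2 hfar).trans_le (le_max_left _ _)
  push Not at hfar
  obtain ⟨k, hk⟩ := hfar
  have hb : ((b : ℝ) : Torus1) = ((b + k : ℝ) : Torus1) := by simp
  obtain ⟨t, ht, hsep⟩ := exists_lt_dist_iterate_of_lt_abs_birkhoffSum hF hT hεη hfη
    (by rwa [← sub_sub]) (hab k)
  exact ⟨t, Nat.lt_succ_of_le ht, by rwa [hb]⟩

lemma exists_isSeparatedSet_winding
    (hF : ∀ x : ℝ, F (x : Torus1) = ((f x : ℝ) : Torus1))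
    (hT : ∀ p : Torus2, T p = (p.1 + (α : Torus1), F p.1 + p.2))
    (hf : Continuous f) {l : ℤ} (hl : l ≠ 0) (hfl : ∀ x : ℝ, f (x + 1) - f x = l)
    {N : ℕ} (hN : 0 < N) {ε η : ℝ} (hε : 0 < ε) (hεη : ε + η ≤ 1 / 2)
    (hfη : ∀ x y, |x - y| ≤ ε → |f x - f y| ≤ η) :
    ∃ E, IsSeparatedSet T (N + 1) ε E ∧ N * |(l : ℝ)| / ε - 1 ≤ E.card := by
  set u := birkhoffSum (· + α) f N
  set w : ℝ := N * l
  have hu : ∀ x (k : ℤ), u (x + k) = u x + k * w := fun x k => by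
    simp only [u, w, birkhoffSum_add_right_add_intCast hfl]
    ring
  have hw : |w| = N * |(l : ℝ)| := by rw [abs_mul, Nat.abs_cast]
  have hw0 : 0 < |w| := abs_pos.2 (mul_ne_zero (Nat.cast_ne_zero.2 hN.ne') (Int.cast_ne_zero.2 hl))
  obtain ⟨M, hM1, hM2⟩ := exists_natCast_mem_Ico (div_pos hw0 hε)
  have hX : ∀ j ∈ Finset.range M, ∃ x, u x = u 0 + j / M * w := fun j hj =>
    exists_eq_add_mul_of_apply_one (continuous_birkhoffSum (continuous_add_const α) hf N)
      (by simpa using hu 0 1)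
      ⟨by positivity,
        div_le_one_of_le₀ (by exact_mod_cast (Finset.mem_range.1 hj).le) (by positivity)⟩
  choose! X hX using hX
  obtain ⟨E, hE, hcard⟩ := exists_isSeparatedSet_card_eq hε.le (Finset.range M)
    (fun j => ((X j : Torus1), 0)) fun i hi j hj hij =>
      exists_lt_dist_iterate_of_forall_lt_abs_birkhoffSum_sub (N := N) hF hT hεη hfη fun k => by
        show ε < |u (X i) - u (X j + k)|
        have hM : (0 : ℝ) < M := by exact_mod_cast (Finset.mem_range.1 hi).pos
        rw [hu, hX i hi, hX j hj]
        calc ε < |w| * (M : ℝ)⁻¹ := by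
              rwa [← div_eq_mul_inv, lt_div_iff₀ hM, mul_comm, ← lt_div_iff₀ hε]
          _ ≤ |w| * |((i : ℝ) - j) / M - k| := by
              gcongr
              exact inv_le_abs_sub_div_sub_intCast (Finset.mem_range.1 hi)
                (Finset.mem_range.1 hj) hij k
          _ = _ := by rw [← abs_mul]; ring_nf
  exact ⟨E, hE, by rwa [hcard, Finset.card_range, ← hw]⟩

lemma exists_isSeparatedSet_card_ge
    (hF : ∀ x : ℝ, F (x : Torus1) = ((f x : ℝ) : Torus1))
    (hT : ∀ p : Torus2, T p = (p.1 + (α : Torus1), F p.1 + p.2))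
    (hf : Continuous f) {l : ℤ} (hl : l ≠ 0) (hfl : ∀ x : ℝ, f (x + 1) - f x = l)
    {ε : ℝ} (hε : 0 < ε) (hεl : 4 * |(l : ℝ)| * ε ≤ 1)
    (hfε : ∀ x y, |x - y| ≤ ε → |f x - f y| ≤ 1 / 4) {n : ℕ} (hn : 1 ≤ n) :
    ∃ E, IsSeparatedSet T n ε E ∧ n * |(l : ℝ)| / (3 * ε) ≤ E.card := by
  have hL : (1 : ℝ) ≤ |(l : ℝ)| := by exact_mod_cast Int.one_le_abs hl
  have hε4 : ε ≤ 1 / 4 := by nlinarith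
  obtain rfl | ⟨N, hN, rfl⟩ : n = 1 ∨ ∃ N, 0 < N ∧ n = N + 1 :=
    (eq_or_lt_of_le hn).imp Eq.symm fun h => ⟨n - 1, by omega, by omega⟩
  · obtain ⟨E, hE, hcard⟩ := exists_isSeparatedSet_grid T one_pos hε (by linarith)
    refine ⟨E, hE, le_trans ?_ hcard⟩
    rw [Nat.cast_one, one_mul, div_sub_one hε.ne', div_pow,
      div_le_div_iff₀ (by positivity) (by positivity)]
    have h916 : 9 / 16 ≤ (1 - ε) ^ 2 := by nlinarith
    nlinarith [mul_le_mul_of_nonneg_right hεl hε.le, mul_le_mul_of_nonneg_left h916 hε.le]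
  · obtain ⟨E, hE, hcard⟩ := exists_isSeparatedSet_winding hF hT hf hl hfl hN hε
      (by linarith) hfε
    refine ⟨E, hE, le_trans ?_ hcard⟩
    have hN1 : (1 : ℝ) ≤ N := by exact_mod_cast hN
    rw [div_sub_one hε.ne', div_le_div_iff₀ (by positivity) hε]
    push_cast
    have h3ε : 3 * ε ≤ (2 * N - 1) * |(l : ℝ)| := by nlinarith
    nlinarith [mul_le_mul_of_nonneg_left h3ε hε.le]

end SkewProduct

theorem stmt2_general (l : ℤ) (hl : l ≠ 0) (α : ℝ)
    (f : ℝ → ℝ) (hf : Continuous f) (hfl : ∀ x : ℝ, f (x + 1) - f x = l)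
    (F : Torus1 → Torus1) (hF : ∀ x : ℝ, F (x : Torus1) = ((f x : ℝ) : Torus1))
    (T : Torus2 → Torus2)
    (hT : ∀ p : Torus2, T p = (p.1 + (α : Torus1), F p.1 + p.2)) :
    ∃ ε₀ > 0, ∀ ε, 0 < ε → ε ≤ ε₀ → ∀ n : ℕ, 1 ≤ n →
      ∃ E : Finset Torus2, IsSeparatedSet T n ε E ∧
        (n : ℝ) * |(l : ℝ)| / (3 * (ε + modCont f ε)) ≤ (E.card : ℝ) := by
  obtain ⟨δ, hδ, hfδ⟩ :=
    Metric.uniformContinuous_iff.1 (uniformContinuous_of_add_one_sub hf hfl) (1 / 4) (by norm_num)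
  refine ⟨min (δ / 2) (1 / (4 * |(l : ℝ)|)), by positivity, fun ε hε hεε₀ n hn => ?_⟩
  have hεl : 4 * |(l : ℝ)| * ε ≤ 1 := by
    rw [← le_div_iff₀' (by positivity)]
    exact hεε₀.trans (min_le_right _ _)
  have hfε : ∀ x y, |x - y| ≤ ε → |f x - f y| ≤ 1 / 4 := fun x y hxy =>
    (hfδ ((hxy.trans (hεε₀.trans (min_le_left _ _))).trans_lt (half_lt_self hδ))).le
  obtain ⟨E, hE, hcard⟩ := exists_isSeparatedSet_card_ge hF hT hf hl hfl hε hεl hfε hn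
  refine ⟨E, hE, hcard.trans' ?_⟩
  gcongr
  linarith [modCont_nonneg hfε hε.le]

theorem stmt2 (l : ℤ) (hl : l ≠ 0) (α : ℝ) (hα : Irrational α)
    (f : ℝ → ℝ) (hf : Continuous f) (hfl : ∀ x : ℝ, f (x + 1) - f x = l)
    (F : Torus1 → Torus1) (hF : ∀ x : ℝ, F (x : Torus1) = ((f x : ℝ) : Torus1))
    (T : Torus2 → Torus2)
    (hT : ∀ p : Torus2, T p = (p.1 + (α : Torus1), F p.1 + p.2)) :
    ∃ ε₀ > 0, ∀ ε, 0 < ε → ε ≤ ε₀ → ∀ n : ℕ, 1 ≤ n →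
      ∃ E : Finset Torus2, IsSeparatedSet T n ε E ∧
        (n : ℝ) * |(l : ℝ)| / (3 * (ε + modCont f ε)) ≤ (E.card : ℝ) :=
  stmt2_general l hl α f hf hfl F hF T hT
end

section
/- Let α be irrational and f : ℝ → ℝ continuous with f(x+1) = f(x) for all x (i.e. f ∈ F₀). Then there exists x₁ ∈ [0,1) such that for all n ≥ 1, f_n(x₁) - n∫₀¹ f(x)dx ≤ 2, where f_n(x) = Σ_{i=0}^{n-1} f(x + iα). -/
open Set MeasureTheory intervalIntegral

private lemma aux_key (α : ℝ) (g : ℝ → ℝ) (hg : Continuous g)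
    (hper : Function.Periodic g 1) (hint : (∫ x in (0:ℝ)..1, g x) = 0) :
    ∃ x₁ ∈ Ico (0:ℝ) 1, ∀ n : ℕ, 1 ≤ n →
      (∑ i ∈ Finset.range n, g (x₁ + i * α)) ≤ 2 := by
  by_contra hcon
  push_neg at hcon
  set S : ℕ → ℝ → ℝ := fun n x => ∑ i ∈ Finset.range n, g (x + i * α) with hS
  -- periodicity of S in x with integer period
  have hgint : ∀ (x : ℝ) (k : ℤ), g (x + k) = g x := by
    intro x k
    simpa using (hper.int_mul k) x
  have hSfract : ∀ n (x : ℝ), S n (Int.fract x) = S n x := by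
    intro n x
    refine Finset.sum_congr rfl fun i _ => ?_
    have : Int.fract x + i * α + (⌊x⌋ : ℤ) = x + i * α := by
      rw [add_right_comm, add_comm (Int.fract x), Int.floor_add_fract]
    rw [← this, hgint]
  have hScont : ∀ n, Continuous (S n) := by
    intro n
    exact continuous_finset_sum _ fun i _ => hg.comp (continuous_id.add continuous_const)
  -- every real has some n ≥ 1 with 2 < S n x
  have hall : ∀ x : ℝ, ∃ n : ℕ, 1 ≤ n ∧ 2 < S n x := by
    intro x
    obtain ⟨n, hn1, hn2⟩ := hcon (Int.fract x) ⟨Int.fract_nonneg x, Int.fract_lt_one x⟩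
    have hn2' : 2 < S n (Int.fract x) := hn2
    exact ⟨n, hn1, by rwa [hSfract] at hn2'⟩
  -- compactness: a uniform N
  obtain ⟨t, ht⟩ := isCompact_Icc.elim_finite_subcover
      (fun k : ℕ => {x : ℝ | 2 < S (k + 1) x})
      (fun k => isOpen_lt continuous_const (hScont (k + 1)))
      (by
        intro x hx
        obtain ⟨n, hn1, hn2⟩ := hall x
        obtain ⟨k, rfl⟩ := Nat.exists_eq_add_of_le hn1
        exact mem_iUnion.2 ⟨k, by simpa [add_comm] using hn2⟩)
  set N : ℕ := t.sup id + 1 with hN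
  have hN1 : 1 ≤ N := Nat.le_add_left 1 _
  have hkey : ∀ x : ℝ, ∃ n : ℕ, 1 ≤ n ∧ n ≤ N ∧ 2 < S n x := by
    intro x
    have hx : Int.fract x ∈ Icc (0:ℝ) 1 :=
      ⟨Int.fract_nonneg x, (Int.fract_lt_one x).le⟩
    obtain ⟨U, hU, hxU⟩ := mem_iUnion₂.1 (ht hx)
    have hxU' : 2 < S (U + 1) (Int.fract x) := hxU
    refine ⟨U + 1, le_add_self, ?_, by rwa [hSfract] at hxU'⟩
    exact Nat.add_le_add_right (Finset.le_sup (f := id) hU) 1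
  -- bound on g
  obtain ⟨y, _, hy⟩ := isCompact_Icc.exists_isMaxOn (nonempty_Icc.2 zero_le_one)
      (hg.abs.continuousOn (s := Icc (0:ℝ) 1))
  set M : ℝ := max (|g y|) 2 with hM
  have hM2 : (2:ℝ) ≤ M := le_max_right _ _
  have hgM : ∀ z : ℝ, |g z| ≤ M := by
    intro z
    have h1 : |g (Int.fract z)| ≤ |g y| :=
      hy ⟨Int.fract_nonneg z, (Int.fract_lt_one z).le⟩
    have h2 : g (Int.fract z) = g z := by
      conv_rhs => rw [← Int.floor_add_fract z, add_comm]
      rw [hgint]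
    rw [h2] at h1
    exact h1.trans (le_max_left _ _)
  -- sum splitting
  have hsplit : ∀ (n k : ℕ) (x : ℝ), S (n + k) x = S n x + S k (x + n * α) := by
    intro n k x
    rw [hS]
    simp only [Finset.sum_range_add]
    congr 1
    refine Finset.sum_congr rfl fun i _ => ?_
    congr 1
    push_cast
    ring
  -- main claim by strong induction
  have hmain : ∀ m : ℕ, ∀ x : ℝ,
      2 * (m : ℝ) - (N : ℝ) * ((N : ℝ) * M) < (N : ℝ) * S m x := by
    intro m
    induction m using Nat.strong_induction_on with
    | _ m ih =>
      intro x
      rcases lt_or_ge m N with hm | hm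
      · -- small case: trivial lower bound
        have hlb : -(m * M) ≤ S m x := by
          have : ∀ i ∈ Finset.range m, -M ≤ g (x + i * α) := fun i _ =>
            neg_le_of_abs_le (hgM _)
          calc -(m * M) = ∑ _i ∈ Finset.range m, (-M) := by
                simp [neg_mul]
            _ ≤ S m x := Finset.sum_le_sum this
        have hmN : (m : ℝ) + 1 ≤ (N : ℝ) := by exact_mod_cast hm
        have hN1' : (1:ℝ) ≤ (N : ℝ) := by exact_mod_cast hN1
        have hNM : (0:ℝ) ≤ (N:ℝ) * M := by positivity
        have h1 : (2:ℝ) * m < 2 * N := by linarith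
        have h2 : (2:ℝ) * N ≤ (N:ℝ) * M := by nlinarith
        have h3 : (N:ℝ) * M ≤ (N:ℝ) * M * ((N:ℝ) - m) :=
          le_mul_of_one_le_right hNM (by linarith)
        have h4 : (N:ℝ) * (-(m * M)) ≤ (N:ℝ) * S m x :=
          mul_le_mul_of_nonneg_left hlb (by positivity)
        nlinarith [h1, h2, h3, h4]
      · -- large case: split off a block
        obtain ⟨n, hn1, hnN, hnS⟩ := hkey x
        have hnm : n ≤ m := hnN.trans hm
        obtain ⟨k, rfl⟩ := Nat.exists_eq_add_of_le hnm
        have hk : k < n + k := Nat.lt_add_of_pos_left hn1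
        have := ih k hk (x + n * α)
        rw [hsplit n k x]
        have hnN' : (n : ℝ) ≤ (N : ℝ) := by exact_mod_cast hnN
        have hN0 : (0:ℝ) < (N : ℝ) := by exact_mod_cast hN1
        have h2 : (N:ℝ) * 2 < (N:ℝ) * S n x := mul_lt_mul_of_pos_left hnS hN0
        rw [show ((n + k : ℕ) : ℝ) = (n : ℝ) + (k : ℝ) by push_cast; ring]
        nlinarith [this, h2, hnN']
  -- integral of S m over [0,1] is 0
  have hSint : ∀ m : ℕ, (∫ x in (0:ℝ)..1, S m x) = 0 := by
    intro m
    rw [hS]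
    rw [intervalIntegral.integral_finset_sum]
    · have : ∀ i ∈ Finset.range m, (∫ x in (0:ℝ)..1, g (x + i * α)) = 0 := by
        intro i _
        rw [intervalIntegral.integral_comp_add_right]
        have h5 := hper.intervalIntegral_add_eq ((i : ℝ) * α) 0
        simp only [zero_add] at h5
        rw [zero_add, show (1:ℝ) + (i:ℝ) * α = (i:ℝ) * α + 1 by ring, h5, hint]
      rw [Finset.sum_congr rfl this, Finset.sum_const, smul_zero]
    · intro i _
      exact (hg.comp (continuous_id.add continuous_const)).intervalIntegrable 0 1
  -- choose m large and derive contradiction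
  set m : ℕ := N * (⌈(N : ℝ) * M⌉₊ + 1) with hm
  have hbig : (N : ℝ) * ((N:ℝ) * M) + (N : ℝ) ≤ 2 * (m : ℝ) := by
    have h1 : (N : ℝ) * M ≤ (⌈(N : ℝ) * M⌉₊ : ℝ) :=
      Nat.le_ceil _
    have hN0 : (1:ℝ) ≤ (N : ℝ) := by exact_mod_cast hN1
    have : (m : ℝ) = (N : ℝ) * ((⌈(N : ℝ) * M⌉₊ : ℝ) + 1) := by
      rw [hm]; push_cast; ring
    nlinarith
  have hpt : ∀ x ∈ Icc (0:ℝ) 1, (1:ℝ) ≤ S m x := by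
    intro x _
    have h := hmain m x
    have hN0 : (0:ℝ) < (N : ℝ) := by exact_mod_cast hN1
    nlinarith
  have hmono : (∫ x in (0:ℝ)..1, (1:ℝ)) ≤ ∫ x in (0:ℝ)..1, S m x := by
    apply intervalIntegral.integral_mono_on zero_le_one
    · exact intervalIntegrable_const
    · exact (hScont m).intervalIntegrable 0 1
    · exact hpt
  rw [hSint m] at hmono
  simp at hmono
  linarith

theorem stmt5 (α : ℝ) (hα : Irrational α)
    (f : ℝ → ℝ) (hf : Continuous f) (hper : ∀ x : ℝ, f (x + 1) = f x) :
    ∃ x₁ ∈ Ico (0:ℝ) 1, ∀ n : ℕ, 1 ≤ n →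
      (∑ i ∈ Finset.range n, f (x₁ + i * α)) - n * (∫ x in (0:ℝ)..1, f x) ≤ 2 := by
  set c : ℝ := ∫ x in (0:ℝ)..1, f x with hc
  have hgc : Continuous (fun x => f x - c) := hf.sub continuous_const
  have hgp : Function.Periodic (fun x => f x - c) 1 := fun x => by simp [hper x]
  have hgi : (∫ x in (0:ℝ)..1, (fun x => f x - c) x) = 0 := by
    simp only
    rw [intervalIntegral.integral_sub (hf.intervalIntegrable 0 1)
      (intervalIntegrable_const)]
    simp [hc]
  obtain ⟨x₁, hx₁, hx⟩ := aux_key α _ hgc hgp hgi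
  refine ⟨x₁, hx₁, fun n hn => ?_⟩
  have := hx n hn
  rw [Finset.sum_sub_distrib, Finset.sum_const, Finset.card_range] at this
  simpa [nsmul_eq_mul] using this
end

section
/- Let α be irrational and f : ℝ → ℝ continuous with period 1. Then there exists x₂ ∈ [0,1) such that for all n ≥ 1, f_n(x₂) - n∫₀¹ f(x)dx ≥ -2, where f_n(x) = Σ_{i=0}^{n-1} f(x + iα). -/
open Set MeasureTheory intervalIntegral

theorem stmt6 (α : ℝ) (hα : Irrational α)
    (f : ℝ → ℝ) (hf : Continuous f) (hper : ∀ x : ℝ, f (x + 1) = f x) :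
    ∃ x₂ ∈ Ico (0:ℝ) 1, ∀ n : ℕ, 1 ≤ n →
      (∑ i ∈ Finset.range n, f (x₂ + i * α)) - n * (∫ x in (0:ℝ)..1, f x) ≥ -2 := by
  by_contra hcon
  push_neg at hcon
  set c : ℝ := ∫ x in (0:ℝ)..1, f x with hc
  set g : ℝ → ℝ := fun x => f x - c with hgdef
  have hg_cont : Continuous g := hf.sub continuous_const
  have hg_per : Function.Periodic g 1 := fun x => by simp [hgdef, hper x]
  have hg_int : ∀ (x : ℝ) (m : ℤ), g (x + m) = g x := by
    intro x m
    simpa using (hg_per.int_mul m) x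
  set S : ℕ → ℝ → ℝ := fun n x => ∑ i ∈ Finset.range n, g (x + i * α) with hSdef
  have hS_cont : ∀ n, Continuous (S n) := by
    intro n
    exact continuous_finset_sum _ fun i _ => hg_cont.comp (continuous_id.add continuous_const)
  have hS_coc : ∀ k m x, S (k + m) x = S k x + S m (x + k * α) := by
    intro k m x
    simp only [hSdef]
    rw [Finset.sum_range_add]
    congr 1
    refine Finset.sum_congr rfl fun i _ => ?_
    congr 1
    push_cast
    ring
  have hS_per : ∀ n x (m : ℤ), S n (x + m) = S n x := by
    intro n x m
    refine Finset.sum_congr rfl fun i _ => ?_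
    rw [show x + m + i * α = (x + i * α) + m by ring, hg_int]
  have hS_fract : ∀ n x, S n x = S n (Int.fract x) := by
    intro n x
    conv_lhs => rw [← Int.fract_add_floor x]
    rw [hS_per]
  -- uniform bound on g
  obtain ⟨x₀, -, hM'⟩ := isCompact_Icc.exists_isMaxOn (s := Icc (0:ℝ) 1)
      ⟨0, by norm_num⟩ (continuous_abs.comp hg_cont).continuousOn
  have hM : ∀ y ∈ Icc (0:ℝ) 1, |g y| ≤ |g x₀| := fun y hy => hM' hy
  set M := |g x₀| with hMdef
  have hM0 : 0 ≤ M := abs_nonneg _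
  have hMx : ∀ x : ℝ, g x ≤ M := by
    intro x
    have h1 : g x = g (Int.fract x) := by
      conv_lhs => rw [← Int.fract_add_floor x, hg_int]
    rw [h1]
    exact le_trans (le_abs_self _)
      (hM _ ⟨Int.fract_nonneg x, (Int.fract_lt_one x).le⟩)
  -- the negation gives: every point has a negative Birkhoff sum
  have hneg : ∀ x : ℝ, ∃ n : ℕ, 1 ≤ n ∧ S n x < 0 := by
    intro x
    obtain ⟨n, hn1, hn2⟩ := hcon (Int.fract x)
      ⟨Int.fract_nonneg x, Int.fract_lt_one x⟩
    refine ⟨n, hn1, ?_⟩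
    have hSx : S n (Int.fract x)
        = (∑ i ∈ Finset.range n, f (Int.fract x + i * α)) - n * c := by
      simp [hSdef, hgdef, Finset.sum_sub_distrib, mul_comm]
    rw [hS_fract n x, hSx]
    linarith
  -- compactness: finitely many scales suffice
  set U : ℕ × ℕ → Set ℝ := fun p => {x | S (p.1 + 1) x < -(1 / (p.2 + 1))} with hUdef
  have hUopen : ∀ p, IsOpen (U p) := fun p =>
    isOpen_lt (hS_cont _) continuous_const
  have hUcover : Icc (0:ℝ) 1 ⊆ ⋃ p, U p := by
    intro x _
    obtain ⟨n, hn1, hn2⟩ := hneg x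
    obtain ⟨k, hk⟩ := exists_nat_one_div_lt (show (0:ℝ) < -(S n x) by linarith)
    refine mem_iUnion.2 ⟨(n - 1, k), ?_⟩
    have hn' : n - 1 + 1 = n := Nat.succ_pred_eq_of_pos hn1
    simp only [hUdef, mem_setOf_eq, hn']
    push_cast
    linarith
  obtain ⟨t, ht⟩ := isCompact_Icc.elim_finite_subcover U hUopen hUcover
  set N : ℕ := t.sup (fun p => p.1) + 1 with hNdef
  set δ : ℝ := 1 / (t.sup (fun p => p.2) + 1) with hδdef
  have hδ : 0 < δ := by positivity
  have hN1 : (1:ℝ) ≤ N := by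
    have : 1 ≤ N := Nat.le_add_left 1 _
    exact_mod_cast this
  have hNpos : (0:ℝ) < N := by linarith
  have key : ∀ x : ℝ, ∃ n : ℕ, 1 ≤ n ∧ n ≤ N ∧ S n x ≤ -δ := by
    intro x
    have hx : Int.fract x ∈ Icc (0:ℝ) 1 :=
      ⟨Int.fract_nonneg x, (Int.fract_lt_one x).le⟩
    obtain ⟨p, hpt, hp⟩ := mem_iUnion₂.1 (ht hx)
    refine ⟨p.1 + 1, Nat.le_add_left 1 _, ?_, ?_⟩
    · have : p.1 ≤ t.sup (fun p => p.1) := Finset.le_sup hpt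
      omega
    · have h1 : S (p.1 + 1) (Int.fract x) < -(1 / (p.2 + 1)) := hp
      have h2 : δ ≤ 1 / ((p.2 : ℝ) + 1) := by
        rw [hδdef]
        apply one_div_le_one_div_of_le (by positivity)
        have : p.2 ≤ t.sup (fun p => p.2) := Finset.le_sup hpt
        have : ((p.2 : ℝ)) ≤ ((t.sup fun p => p.2 : ℕ) : ℝ) := Nat.cast_le.mpr this
        linarith
      rw [hS_fract]
      linarith
  -- trivial bound
  have htriv : ∀ (n : ℕ) (x : ℝ), S n x ≤ n * M := by
    intro n x
    calc S n x ≤ ∑ i ∈ Finset.range n, M :=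
          Finset.sum_le_sum fun i _ => hMx _
      _ = n * M := by simp [mul_comm]
  -- main inductive bound
  have main : ∀ (n : ℕ) (x : ℝ), S n x ≤ N * (M + δ) - (δ / N) * n := by
    intro n
    induction n using Nat.strong_induction_on with
    | _ n ih =>
      intro x
      by_cases hn : n ≤ N
      · have h1 : S n x ≤ n * M := htriv n x
        have h2 : (n : ℝ) ≤ N := by exact_mod_cast hn
        have h3 : (δ / N) * n ≤ δ := by
          rw [div_mul_eq_mul_div, div_le_iff₀ hNpos]
          nlinarith
        nlinarith
      · push_neg at hn
        obtain ⟨k, hk1, hkN, hkS⟩ := key x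
        have hkn : k < n := lt_of_le_of_lt hkN hn
        have hsplit : S n x = S k x + S (n - k) (x + k * α) := by
          conv_lhs => rw [show n = k + (n - k) by omega]
          exact hS_coc k (n - k) x
        have hih := ih (n - k) (by omega) (x + k * α)
        have hcast : ((n - k : ℕ) : ℝ) = (n : ℝ) - k := by
          push_cast [Nat.cast_sub hkn.le]
          ring
        rw [hsplit]
        rw [hcast] at hih
        have hkN' : (k : ℝ) ≤ N := by exact_mod_cast hkN
        have h4 : (δ / N) * k ≤ δ := by
          rw [div_mul_eq_mul_div, div_le_iff₀ hNpos]
          nlinarith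
        nlinarith
  -- choose n large enough that the bound is negative
  obtain ⟨n, hnlarge⟩ := exists_nat_gt (N * (M + δ) * N / δ)
  have hnneg : ∀ x : ℝ, S n x ≤ N * (M + δ) - (δ / N) * n := fun x => main n x
  have hBneg : N * (M + δ) - (δ / N) * n < 0 := by
    rw [sub_neg, div_mul_eq_mul_div, lt_div_iff₀ hNpos]
    calc N * (M + δ) * N = (N * (M + δ) * N / δ) * δ := by field_simp
      _ < n * δ := by
          apply mul_lt_mul_of_pos_right hnlarge hδ
      _ = δ * n := mul_comm _ _
  -- but the integral of S n over [0,1] is 0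
  have hg_int0 : (∫ x in (0:ℝ)..1, g x) = 0 := by
    rw [hgdef]
    rw [intervalIntegral.integral_sub (hf.intervalIntegrable 0 1)
      (intervalIntegrable_const)]
    simp [hc]
  have hshift : ∀ a : ℝ, (∫ x in (0:ℝ)..1, g (x + a)) = 0 := by
    intro a
    rw [intervalIntegral.integral_comp_add_right]
    have := hg_per.intervalIntegral_add_eq a 0
    simp only [zero_add] at this
    rw [show (0:ℝ) + a = a by ring, show (1:ℝ) + a = a + 1 by ring] at *
    rw [this, hg_int0]
  have hSint : (∫ x in (0:ℝ)..1, S n x) = 0 := by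
    rw [hSdef]
    rw [intervalIntegral.integral_finset_sum]
    · simp only [hshift, Finset.sum_const_zero]
    · intro i _
      exact ((hg_cont.comp (continuous_id.add continuous_const)).intervalIntegrable 0 1)
  have hle : (∫ x in (0:ℝ)..1, S n x) ≤ N * (M + δ) - (δ / N) * n := by
    calc (∫ x in (0:ℝ)..1, S n x)
        ≤ ∫ _ in (0:ℝ)..1, (N * (M + δ) - (δ / N) * n) := by
          apply intervalIntegral.integral_mono_on zero_le_one
            ((hS_cont n).intervalIntegrable 0 1) intervalIntegrable_const
          intro x _
          exact hnneg x
      _ = N * (M + δ) - (δ / N) * n := by simp [hδdef]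
  rw [hSint] at hle
  linarith
end

section
/- Let α be irrational and g : ℝ → ℝ continuous with period 1. Then the set A = {x ∈ 𝕋¹ : sup_{n≥1} (g_n(x) - n∫₀¹ g) < ∞} is dense in 𝕋¹, where g_n(x) = Σ_{i=0}^{n-1} g(x + iα). -/
open Set MeasureTheory intervalIntegral

open Filter Topology

noncomputable def BS (α : ℝ) (f : ℝ → ℝ) (n : ℕ) (x : ℝ) : ℝ :=
  ∑ i ∈ Finset.range n, f (x + i * α)

lemma BS_cocycle (α : ℝ) (f : ℝ → ℝ) (m n : ℕ) (x : ℝ) :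
    BS α f (m + n) x = BS α f m x + BS α f n (x + m * α) := by
  unfold BS
  rw [Finset.sum_range_add]
  congr 1
  refine Finset.sum_congr rfl fun i _ => ?_
  congr 1
  push_cast
  ring

lemma BS_cont (α : ℝ) (f : ℝ → ℝ) (hf : Continuous f) (n : ℕ) :
    Continuous (BS α f n) :=
  continuous_finset_sum _ fun i _ => hf.comp (continuous_id.add continuous_const)

lemma BS_per (α : ℝ) (f : ℝ → ℝ) (hper : ∀ x, f (x + 1) = f x) (n : ℕ) :
    Function.Periodic (BS α f n) 1 := by
  intro x
  unfold BS
  refine Finset.sum_congr rfl fun i _ => ?_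
  rw [show x + 1 + i * α = x + i * α + 1 by ring, hper]

lemma BS_int_per (α : ℝ) (f : ℝ → ℝ) (hper : ∀ x, f (x + 1) = f x) (n : ℕ) (x : ℝ) (m : ℤ) :
    BS α f n (x + m) = BS α f n x := by
  have h := (BS_per α f hper n).int_mul m
  simpa using h x

lemma BS_abs_le (α : ℝ) (f : ℝ → ℝ) (C : ℝ) (hC : ∀ x, |f x| ≤ C) (n : ℕ) (x : ℝ) :
    |BS α f n x| ≤ n * C := by
  calc |BS α f n x| ≤ ∑ i ∈ Finset.range n, |f (x + i * α)| := Finset.abs_sum_le_sum_abs _ _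
    _ ≤ ∑ i ∈ Finset.range n, C := Finset.sum_le_sum fun i _ => hC _
    _ = n * C := by simp [mul_comm]

lemma BS_integral (α : ℝ) (f : ℝ → ℝ) (hf : Continuous f) (hper : ∀ x, f (x + 1) = f x)
    (hint : (∫ t in (0:ℝ)..1, f t) = 0) (n : ℕ) :
    (∫ x in (0:ℝ)..1, BS α f n x) = 0 := by
  unfold BS
  rw [intervalIntegral.integral_finset_sum (μ := volume) (a := 0) (b := 1)
    (f := fun (i : ℕ) (x : ℝ) => f (x + (i : ℝ) * α))
    (fun i _ => (Continuous.intervalIntegrable (by fun_prop) 0 1))]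
  refine Finset.sum_eq_zero fun i _ => ?_
  have hP : Function.Periodic f 1 := hper
  have h1 : (∫ x in (0:ℝ)..1, f (x + i * α)) = ∫ x in (0:ℝ)+(i:ℝ)*α..(1:ℝ)+(i:ℝ)*α, f x :=
    intervalIntegral.integral_comp_add_right _ _
  rw [h1]
  have h2 := hP.intervalIntegral_add_eq ((i:ℝ)*α) 0
  rw [show (0:ℝ)+(i:ℝ)*α = (i:ℝ)*α by ring, show (1:ℝ)+(i:ℝ)*α = (i:ℝ)*α + 1 by ring, h2,
    zero_add, hint]

lemma stepA (α : ℝ) (f : ℝ → ℝ) (hf : Continuous f) (hper : ∀ x, f (x + 1) = f x)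
    (hint : (∫ t in (0:ℝ)..1, f t) = 0) (C : ℝ) (hC : ∀ x, |f x| ≤ C)
    (n : ℕ) (hn : 1 ≤ n) :
    ∃ y ∈ Icc (0:ℝ) 1, ∀ k, 1 ≤ k → k ≤ n → BS α f k y ≤ 0 := by
  by_contra hcon
  push_neg at hcon
  -- hcon : ∀ y ∈ Icc 0 1, ∃ k, 1 ≤ k ∧ k ≤ n ∧ 0 < BS α f k y
  have hne : (Finset.Icc 1 n).Nonempty := ⟨1, Finset.mem_Icc.mpr ⟨le_refl 1, hn⟩⟩
  set φ : ℝ → ℝ := fun y => (Finset.Icc 1 n).sup' hne (fun k => BS α f k y) with hφ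
  have hφc : Continuous φ := by
    rw [continuous_iff_continuousAt]
    intro x
    exact Filter.Tendsto.finset_sup'_nhds_apply hne
      (fun k _ => ((BS_cont α f hf k).tendsto x))
  have hφpos : ∀ y ∈ Icc (0:ℝ) 1, 0 < φ y := by
    intro y hy
    obtain ⟨k, hk1, hk2, hk3⟩ := hcon y hy
    refine lt_of_lt_of_le hk3 ?_
    simp only [hφ]
    exact Finset.le_sup' (fun k => BS α f k y) (Finset.mem_Icc.mpr ⟨hk1, hk2⟩)
  obtain ⟨y₀, hy₀, hmin⟩ := isCompact_Icc.exists_isMinOn (nonempty_Icc.2 zero_le_one)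
    (hφc.continuousOn)
  set δ : ℝ := φ y₀ with hδdef
  have hδpos : 0 < δ := hφpos y₀ hy₀
  -- uniform: every y has some k ∈ [1,n] with δ ≤ BS k y
  have hδ : ∀ y : ℝ, ∃ k : ℕ, 1 ≤ k ∧ k ≤ n ∧ δ ≤ BS α f k y := by
    intro y
    have hz : Int.fract y ∈ Icc (0:ℝ) 1 :=
      ⟨Int.fract_nonneg y, (Int.fract_lt_one y).le⟩
    have h1 : δ ≤ φ (Int.fract y) := hmin hz
    obtain ⟨k, hk, hke⟩ := Finset.exists_mem_eq_sup' hne (fun k => BS α f k (Int.fract y))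
    simp only [Finset.mem_Icc] at hk
    refine ⟨k, hk.1, hk.2, ?_⟩
    have : BS α f k (Int.fract y) = BS α f k y := by
      have := BS_int_per α f hper k (Int.fract y) ⌊y⌋
      rw [← this]
      congr 1
      rw [Int.fract]
      ring
    rw [← this]
    exact h1.trans_eq hke
  choose step hstep1 hstepn hstepδ using hδ
  have hC0 : 0 ≤ C := (abs_nonneg _).trans (hC 0)
  -- choose q with n*C + 1 ≤ q * δ
  obtain ⟨q, hq⟩ := exists_nat_ge ((n * C + 1) / δ)
  have hqδ : n * C + 1 ≤ q * δ := by
    rw [div_le_iff₀ hδpos] at hq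
    exact hq
  set j : ℕ := n * (q + 1) with hj
  have claim : ∀ x : ℝ, (1:ℝ) ≤ BS α f j x := by
    intro x
    set K : ℕ → ℕ := fun m => Nat.rec 0 (fun _ km => km + step (x + km * α)) m with hK
    have hKstep : ∀ m, K (m + 1) = K m + step (x + K m * α) := fun m => rfl
    have hK0 : K 0 = 0 := rfl
    have hKlow : ∀ m : ℕ, (m : ℝ) * δ ≤ BS α f (K m) x := by
      intro m
      induction m with
      | zero => simp [hK0, BS]
      | succ m ih =>
        rw [hKstep, BS_cocycle]
        push_cast
        have := hstepδ (x + K m * α)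
        nlinarith [this, ih]
    have hKub : ∀ m, K m ≤ m * n := by
      intro m
      induction m with
      | zero => simp [hK0]
      | succ m ih =>
        rw [hKstep]
        calc K m + step (x + K m * α) ≤ m * n + n :=
          Nat.add_le_add ih (hstepn _)
        _ = (m + 1) * n := by ring
    have hKlb : ∀ m, m ≤ K m := by
      intro m
      induction m with
      | zero => simp
      | succ m ih =>
        rw [hKstep]
        have := hstep1 (x + K m * α)
        omega
    -- find greatest m with K m ≤ j
    set m := Nat.findGreatest (fun m => K m ≤ j) j with hm
    have hmP : K m ≤ j :=
      Nat.findGreatest_spec (P := fun m => K m ≤ j) (Nat.zero_le j) (by simp [hK0])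
    have hmlt : j < K (m + 1) := by
      by_cases h : m + 1 ≤ j
      · have h4 := Nat.findGreatest_is_greatest (P := fun m => K m ≤ j)
          (Nat.lt_succ_self m) h
        have h3 : ¬ K (m + 1) ≤ j := h4
        omega
      · have h2 := hKlb (m + 1)
        omega
    -- m ≥ q + 1
    have hmge : q + 1 ≤ m := by
      have h1 : n * (q + 1) < n * (m + 1) := by
        calc n * (q + 1) = j := hj.symm
        _ < K (m + 1) := hmlt
        _ ≤ (m + 1) * n := hKub (m + 1)
        _ = n * (m + 1) := Nat.mul_comm _ _
      have := Nat.lt_of_mul_lt_mul_left h1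
      omega
    -- decompose
    have hdec : BS α f j x = BS α f (K m) x + BS α f (j - K m) (x + K m * α) := by
      rw [← BS_cocycle, Nat.add_sub_cancel' hmP]
    have hrem : j - K m ≤ n := by
      have := hKstep m
      have := hstepn (x + K m * α)
      omega
    have habs : |BS α f (j - K m) (x + K m * α)| ≤ n * C := by
      calc |BS α f (j - K m) (x + K m * α)| ≤ (j - K m : ℕ) * C :=
        BS_abs_le α f C hC _ _
      _ ≤ n * C := by
        apply mul_le_mul_of_nonneg_right _ hC0
        exact_mod_cast hrem
    have hlow := hKlow m
    have hmge' : ((q:ℝ) + 1) * δ ≤ (m : ℝ) * δ := by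
      apply mul_le_mul_of_nonneg_right _ hδpos.le
      exact_mod_cast hmge
    have habs' : -(n * C) ≤ BS α f (j - K m) (x + K m * α) := neg_le_of_abs_le habs
    linarith [hdec, hlow, hmge', habs', hqδ, hδpos.le]
  -- contradiction via integral
  have hint0 := BS_integral α f hf hper hint j
  have hmono : (∫ x in (0:ℝ)..1, (1:ℝ)) ≤ ∫ x in (0:ℝ)..1, BS α f j x := by
    apply intervalIntegral.integral_mono_on zero_le_one
      (intervalIntegrable_const) (((BS_cont α f hf j)).intervalIntegrable 0 1)
    intro x _
    exact claim x
  rw [hint0] at hmono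
  norm_num at hmono

lemma exists_allNonpos (α : ℝ) (f : ℝ → ℝ) (hf : Continuous f) (hper : ∀ x, f (x + 1) = f x)
    (hint : (∫ t in (0:ℝ)..1, f t) = 0) (C : ℝ) (hC : ∀ x, |f x| ≤ C) :
    ∃ y : ℝ, ∀ n : ℕ, 1 ≤ n → BS α f n y ≤ 0 := by
  have hA : ∀ n : ℕ, ∃ y ∈ Icc (0:ℝ) 1, ∀ k, 1 ≤ k → k ≤ n + 1 → BS α f k y ≤ 0 :=
    fun n => stepA α f hf hper hint C hC (n + 1) (Nat.le_add_left 1 n)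
  choose Y hY1 hY2 using hA
  obtain ⟨y, hy, ψ, hψmono, hψtend⟩ := isCompact_Icc.tendsto_subseq hY1
  refine ⟨y, fun n hn => ?_⟩
  have htend : Filter.Tendsto (fun i => BS α f n (Y (ψ i))) Filter.atTop (𝓝 (BS α f n y)) :=
    ((BS_cont α f hf n).tendsto y).comp hψtend
  refine le_of_tendsto htend ?_
  filter_upwards [Filter.eventually_ge_atTop n] with i hi
  exact hY2 (ψ i) n hn (le_trans (le_trans hi (hψmono.le_apply)) (Nat.le_succ _))

lemma dense_coset (α : ℝ) (hα : Irrational α) (y : ℝ) :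
    Dense {z : ℝ | ∃ k m : ℤ, z = y + k * α + m} := by
  set S : AddSubgroup ℝ := AddSubgroup.zmultiples α ⊔ AddSubgroup.zmultiples 1 with hS
  have hdense : Dense (S : Set ℝ) := by
    rcases S.dense_or_cyclic with h | ⟨a, ha⟩
    · exact h
    · exfalso
      have h1 : (1:ℝ) ∈ S := le_sup_right (α := AddSubgroup ℝ)
        (AddSubgroup.mem_zmultiples 1)
      have hαS : α ∈ S := le_sup_left (α := AddSubgroup ℝ)
        (AddSubgroup.mem_zmultiples α)
      rw [ha, AddSubgroup.mem_closure_singleton] at h1 hαS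
      obtain ⟨p, hp⟩ := h1
      obtain ⟨q, hq⟩ := hαS
      have hp' : (p : ℝ) * a = 1 := by rw [← hp]; simp [zsmul_eq_mul]
      have hq' : (q : ℝ) * a = α := by rw [← hq]; simp [zsmul_eq_mul]
      have hp0 : p ≠ 0 := by rintro rfl; simp at hp'
      refine hα ⟨(q : ℚ) / (p : ℚ), ?_⟩
      push_cast
      rw [div_eq_iff (by exact_mod_cast hp0)]
      linear_combination p * hq' - q * hp'
  have hsurj : Function.Surjective (fun z : ℝ => y + z) := fun z => ⟨z - y, by ring⟩
  have himg : Dense ((fun z : ℝ => y + z) '' (S : Set ℝ)) :=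
    hsurj.denseRange.dense_image (continuous_const.add continuous_id) hdense
  refine himg.mono ?_
  rintro _ ⟨z, hz, rfl⟩
  have hz' : z ∈ AddSubgroup.zmultiples α ⊔ AddSubgroup.zmultiples 1 := hz
  rw [AddSubgroup.mem_sup] at hz'
  obtain ⟨u, hu, v, hv, rfl⟩ := hz'
  obtain ⟨k, rfl⟩ := AddSubgroup.mem_zmultiples_iff.mp hu
  obtain ⟨m, rfl⟩ := AddSubgroup.mem_zmultiples_iff.mp hv
  exact ⟨k, m, by simp [zsmul_eq_mul]; ring⟩

lemma BS_sub_eq (α : ℝ) (g : ℝ → ℝ) (c : ℝ) (n : ℕ) (x : ℝ) :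
    BS α (fun t => g t - c) n x = (∑ i ∈ Finset.range n, g (x + i * α)) - n * c := by
  unfold BS
  rw [Finset.sum_sub_distrib]
  simp [mul_comm]

theorem stmt7 (α : ℝ) (hα : Irrational α)
    (g : ℝ → ℝ) (hg : Continuous g) (hper : ∀ x : ℝ, g (x + 1) = g x) :
    Dense {p : Torus1 | ∃ x : ℝ, (x : Torus1) = p ∧ ∃ M : ℝ, ∀ n : ℕ, 1 ≤ n →
      (∑ i ∈ Finset.range n, g (x + i * α)) - n * (∫ t in (0:ℝ)..1, g t) ≤ M} := by
  set c : ℝ := ∫ t in (0:ℝ)..1, g t with hc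
  set f : ℝ → ℝ := fun x => g x - c with hfdef
  have hf : Continuous f := hg.sub continuous_const
  have hper' : ∀ x, f (x + 1) = f x := fun x => by simp only [hfdef, hper x]
  have hPer : Function.Periodic f 1 := hper'
  have hint : (∫ t in (0:ℝ)..1, f t) = 0 := by
    rw [hfdef]
    rw [intervalIntegral.integral_sub (hg.intervalIntegrable 0 1) intervalIntegrable_const]
    simp [hc]
  obtain ⟨C, hCb⟩ := isCompact_Icc.exists_bound_of_continuousOn
    (hf.continuousOn (s := Icc (0:ℝ) 1))
  have hC : ∀ x, |f x| ≤ C := by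
    intro x
    have h1 : f x = f (Int.fract x) := by
      have h2 := (hPer.int_mul ⌊x⌋) (Int.fract x)
      rw [mul_one] at h2
      rw [← h2]
      congr 1
      rw [Int.fract]
      ring
    rw [h1, ← Real.norm_eq_abs]
    exact hCb _ ⟨Int.fract_nonneg x, (Int.fract_lt_one x).le⟩
  have hC0 : 0 ≤ C := (abs_nonneg _).trans (hC 0)
  obtain ⟨y, hy⟩ := exists_allNonpos α f hf hper' hint C hC
  have hd := dense_coset α hα y
  have hq : Dense (((↑) : ℝ → Torus1) '' {z : ℝ | ∃ k m : ℤ, z = y + k * α + m}) :=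
    QuotientAddGroup.mk_surjective.denseRange.dense_image QuotientAddGroup.continuous_mk hd
  refine hq.mono ?_
  rintro _ ⟨z, ⟨k, m, rfl⟩, rfl⟩
  obtain ⟨k', rfl | rfl⟩ := k.eq_nat_or_neg
  · -- forward orbit point: x = y + k'*α
    refine ⟨y + (k' : ℝ) * α, ?_, -(BS α f k' y), fun n hn => ?_⟩
    · rw [QuotientAddGroup.eq_iff_sub_mem]
      refine AddSubgroup.mem_zmultiples_iff.mpr ⟨-m, ?_⟩
      push_cast
      simp only [zsmul_eq_mul]
      push_cast
      ring
    · have hco := BS_cocycle α f k' n y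
      have h1 := hy (k' + n) (le_trans hn (Nat.le_add_left n k'))
      have hgoal : BS α f n (y + (k' : ℝ) * α) ≤ -(BS α f k' y) := by linarith
      rw [BS_sub_eq α g c n (y + (k' : ℝ) * α)] at hgoal
      exact hgoal
  · -- backward orbit point: x = y - k'*α
    refine ⟨y + ((-(k' : ℤ) : ℤ) : ℝ) * α, ?_, (k' : ℝ) * C, fun n hn => ?_⟩
    · rw [QuotientAddGroup.eq_iff_sub_mem]
      refine AddSubgroup.mem_zmultiples_iff.mpr ⟨-m, ?_⟩
      simp only [zsmul_eq_mul]
      push_cast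
      ring
    · set x : ℝ := y + ((-(k' : ℤ) : ℤ) : ℝ) * α with hx
      have hxy : x + (k' : ℝ) * α = y := by rw [hx]; push_cast; ring
      have hgoal : BS α f n x ≤ (k' : ℝ) * C := by
        rcases le_or_gt n k' with h | h
        · calc BS α f n x ≤ |BS α f n x| := le_abs_self _
          _ ≤ (n : ℝ) * C := BS_abs_le α f C hC n x
          _ ≤ (k' : ℝ) * C := by
            apply mul_le_mul_of_nonneg_right _ hC0
            exact_mod_cast h
        · have hco := BS_cocycle α f k' (n - k') x
          rw [Nat.add_sub_cancel' h.le, hxy] at hco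
          have h1 := hy (n - k') (by omega)
          have h2 : BS α f k' x ≤ (k' : ℝ) * C :=
            le_trans (le_abs_self _) (BS_abs_le α f C hC k' x)
          linarith
      rw [BS_sub_eq α g c n x] at hgoal
      exact hgoal
end

section
/- Let f : ℝ → ℝ be continuous with f(x+1) - f(x) = l for all x, l a nonzero integer, and α irrational; define T(x,y) = (x+α, f(x)+y) on 𝕋². Then the regionally proximal relation of (𝕋², T) equals {((x,y₁),(x,y₂)) : x, y₁, y₂ ∈ 𝕋¹}. -/
/-- The regionally proximal relation of `(X, T)` for an invertible system `T`:
`(p, q)` is regionally proximal iff for every `ε > 0` and all neighborhoods `U` of `p`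
and `V` of `q` there are `p' ∈ U`, `q' ∈ V` and `n ∈ ℤ` with `dist (Tⁿ p') (Tⁿ q') < ε`. -/
def RegProx (T : Equiv.Perm Torus2) (p q : Torus2) : Prop :=
  ∀ ε > (0:ℝ), ∀ U ∈ nhds p, ∀ V ∈ nhds q,
    ∃ p' ∈ U, ∃ q' ∈ V, ∃ n : ℤ, dist ((T ^ n) p') ((T ^ n) q') < ε

open Set Function

section Perm

variable {X Y : Type*}

theorem Function.Semiconj.perm_zpow {π : X → Y} {S : Equiv.Perm X} {T : Equiv.Perm Y}
    (h : Semiconj π S T) (n : ℤ) : Semiconj π ⇑(S ^ n) ⇑(T ^ n) := by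
  have hinv : Semiconj π ⇑S⁻¹ ⇑T⁻¹ := fun x => by
    rw [eq_comm, Equiv.Perm.inv_eq_iff_eq, ← h]; simp
  induction n using Int.induction_on with
  | zero => exact fun _ => rfl
  | succ n ih =>
    rw [zpow_add_one, zpow_add_one, Equiv.Perm.coe_mul, Equiv.Perm.coe_mul]
    exact ih.comp_right h
  | pred n ih =>
    rw [zpow_sub_one, zpow_sub_one, Equiv.Perm.coe_mul, Equiv.Perm.coe_mul]
    exact ih.comp_right hinv

theorem Equiv.Perm.continuous_zpow [TopologicalSpace X] {S : Equiv.Perm X} (hS : Continuous S)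
    (hS' : Continuous ⇑S⁻¹) (n : ℤ) : Continuous ⇑(S ^ n) := by
  induction n using Int.induction_on with
  | zero => exact continuous_id
  | succ n ih => rw [zpow_add_one]; exact ih.comp hS
  | pred n ih => rw [zpow_sub_one]; exact ih.comp hS'

end Perm

theorem exists_div_le_apply_add_div_sub (g : ℝ → ℝ) (a h : ℝ) {M : ℕ} (hM : 0 < M) :
    ∃ u, (g (a + h) - g a) / M ≤ g (u + h / M) - g u := by
  set t : ℕ → ℝ := fun i => a + i * (h / M)
  have htel : ∑ i ∈ Finset.range M, (g (t (i + 1)) - g (t i)) = g (a + h) - g a := by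
    refine (Finset.sum_range_sub (fun i => g (t i)) M).trans ?_
    simp only [t, Nat.cast_zero, zero_mul, add_zero]
    field_simp
  obtain ⟨i, -, hi⟩ := Finset.exists_le_of_sum_le (Finset.nonempty_range_iff.2 hM.ne')
    (f := fun _ => (g (a + h) - g a) / M) (g := fun i => g (t (i + 1)) - g (t i))
    (by rw [htel, Finset.sum_const, Finset.card_range, nsmul_eq_mul,
      mul_div_cancel₀ _ (Nat.cast_ne_zero.2 hM.ne')])
  refine ⟨t i, hi.trans_eq ?_⟩
  simp only [t, Nat.cast_succ, add_mul, one_mul, add_assoc]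

theorem Irrational.exists_lt_apply_add_int_mul {α : ℝ} (hα : Irrational α) {g : ℝ → ℝ}
    (hg : Continuous g) (hper : Periodic g 1) {c u : ℝ} (hu : c < g u) (x : ℝ) :
    ∃ m : ℤ, c < g (x + m * α) := by
  have hdense : Dense (AddSubgroup.closure {α, (1 : ℝ)} : Set ℝ) :=
    dense_addSubgroupClosure_pair_iff.2 (by rwa [div_one])
  obtain ⟨y, hy, hcy⟩ := hdense.exists_mem_open
    (isOpen_lt continuous_const (hg.comp (continuous_const_add x))) ⟨u - x, by simpa using hu⟩
  obtain ⟨m, j, rfl⟩ := AddSubgroup.mem_closure_pair.1 hy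
  refine ⟨m, ?_⟩
  rw [← hper.int_mul j (x + m * α)]
  simpa [zsmul_eq_mul, add_assoc] using hcy

theorem exists_mem_Icc_coe_sub_eq {g : ℝ → ℝ} {a b : ℝ} (hab : a ≤ b)
    (hg : ContinuousOn g (Icc a b)) (h : 1 ≤ |g b - g a|) (v : AddCircle (1 : ℝ)) :
    ∃ δ ∈ Icc a b, ((g δ - g a : ℝ) : AddCircle (1 : ℝ)) = v := by
  obtain ⟨e, he⟩ : ∃ e, Icc e (e + 1) ⊆ uIcc (g a) (g b) := by
    rcases le_abs'.1 h with h | h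
    · exact ⟨g b, (Icc_subset_Icc_right (by linarith)).trans Icc_subset_uIcc'⟩
    · exact ⟨g a, (Icc_subset_Icc_right (by linarith)).trans Icc_subset_uIcc⟩
  obtain ⟨t, ht, hvt⟩ : ∃ t ∈ Icc e (e + 1), (t : AddCircle (1 : ℝ)) = g a + v := by
    rw [← mem_image, AddCircle.coe_image_Icc_eq]
    exact mem_univ _
  rw [← uIcc_of_le hab] at hg ⊢
  obtain ⟨δ, hδ, rfl⟩ := intermediate_value_uIcc hg (he ht)
  exact ⟨δ, hδ, by rw [AddCircle.coe_sub, hvt, add_sub_cancel_left]⟩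

namespace SkewProduct

variable (α : ℝ) (f : ℝ → ℝ)

def lift : Equiv.Perm (ℝ × ℝ) where
  toFun p := (p.1 + α, p.2 + f p.1)
  invFun p := (p.1 - α, p.2 - f (p.1 - α))
  left_inv p := by simp
  right_inv p := by simp

/-- For `n ≥ 0` this is the Birkhoff sum `f x + f (x + α) + ⋯ + f (x + (n - 1) α)`. -/
def cocycle (n : ℤ) (x : ℝ) : ℝ := ((lift α f ^ n) (x, 0)).2

theorem lift_zpow_apply (n : ℤ) (x y : ℝ) :
    (lift α f ^ n) (x, y) = (x + n * α, y + cocycle α f n x) := by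
  have hfst : Semiconj Prod.fst (lift α f) (Equiv.addRight α) := fun _ => rfl
  have hvert : Semiconj (· + (0, y)) (lift α f) (lift α f) := fun p => by
    simp only [lift, Equiv.coe_fn_mk, Prod.fst_add, Prod.snd_add, add_zero, Prod.mk_add_mk]
    ring_nf
  have h := hvert.perm_zpow n (x, 0)
  simp only [Prod.mk_add_mk, add_zero, zero_add] at h
  rw [← h]
  ext
  · simpa [zsmul_eq_mul] using hfst.perm_zpow n (x, 0)
  · simp [cocycle, add_comm]

theorem cocycle_add (m n : ℤ) (x : ℝ) :
    cocycle α f (m + n) x = cocycle α f n x + cocycle α f m (x + n * α) := by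
  have h := congrArg Prod.snd (lift_zpow_apply α f (m + n) x 0)
  rw [zpow_add, Equiv.Perm.mul_apply, lift_zpow_apply, lift_zpow_apply] at h
  linarith

theorem cocycle_add_one (n : ℤ) (x : ℝ) :
    cocycle α f (n + 1) x = f x + cocycle α f n (x + α) := by
  rw [cocycle_add, Int.cast_one, one_mul]
  simp [cocycle, lift]

theorem continuous_cocycle (hf : Continuous f) (n : ℤ) : Continuous (cocycle α f n) := by
  have hS : Continuous (lift α f) := by
    change Continuous fun p : ℝ × ℝ => (p.1 + α, p.2 + f p.1)
    fun_prop
  have hS' : Continuous ⇑(lift α f)⁻¹ := by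
    change Continuous fun p : ℝ × ℝ => (p.1 - α, p.2 - f (p.1 - α))
    fun_prop
  exact continuous_snd.comp ((Equiv.Perm.continuous_zpow hS hS' n).comp (by fun_prop))

theorem cocycle_apply_add_one {l : ℝ} (hfl : ∀ x, f (x + 1) - f x = l) (n : ℤ) (x : ℝ) :
    cocycle α f n (x + 1) = cocycle α f n x + n * l := by
  induction n using Int.induction_on generalizing x with
  | zero => simp [cocycle]
  | succ n ih =>
    rw [cocycle_add_one, cocycle_add_one, add_right_comm, ih]
    push_cast
    linarith [hfl x]
  | pred n ih =>
    have h (y : ℝ) : cocycle α f (-n - 1) (y + α) = cocycle α f (-n) y - f y := by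
      rw [eq_sub_iff_add_eq', ← cocycle_add_one, sub_add_cancel]
    obtain ⟨y, rfl⟩ : ∃ y, x = y + α := ⟨x - α, by ring⟩
    rw [add_right_comm, h, h, ih]
    push_cast
    linarith [hfl y]

variable {α f}

theorem exists_one_le_abs_cocycle_sub {l : ℤ} (hl : l ≠ 0) (hα : Irrational α)
    (hf : Continuous f) (hfl : ∀ x, f (x + 1) - f x = l) (x : ℝ) {r : ℝ} (hr : 0 < r) :
    ∃ n : ℤ, ∃ s ∈ Ioc 0 r, 1 ≤ |cocycle α f n (x + s) - cocycle α f n x| := by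
  obtain ⟨M, hM, hMr⟩ : ∃ M : ℕ, 0 < M ∧ 1 / (M : ℝ) ≤ r :=
    ⟨⌈r⁻¹⌉₊, Nat.ceil_pos.2 (inv_pos.2 hr),
      by rw [one_div, inv_le_comm₀ (by positivity) hr]; exact Nat.le_ceil _⟩
  have hs : 1 / (M : ℝ) ∈ Ioc 0 r := ⟨by positivity, hMr⟩
  set n : ℤ := 3 * M * l
  have hl2 : (1 : ℝ) ≤ l ^ 2 := by
    rw [one_le_sq_iff_one_le_abs]; exact_mod_cast Int.one_le_abs hl
  have hnl : (n : ℝ) * l / M = 3 * l ^ 2 := by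
    simp only [n]; push_cast; field_simp
  obtain ⟨u, hu⟩ := exists_div_le_apply_add_div_sub (cocycle α f n) 0 1 hM
  have hperiod := cocycle_apply_add_one α f hfl n 0
  rw [zero_add] at hu hperiod
  have hu2 : 2 < cocycle α f n (u + 1 / M) - cocycle α f n u := by
    rw [hperiod, add_sub_cancel_left, hnl] at hu; linarith
  have hper : Periodic (fun z => cocycle α f n (z + 1 / M) - cocycle α f n z) 1 := fun z => by
    simp only [add_right_comm z 1, cocycle_apply_add_one α f hfl]; ring
  have hcont : Continuous fun z => cocycle α f n (z + 1 / M) - cocycle α f n z := by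
    have := continuous_cocycle α f hf n; fun_prop
  obtain ⟨m, hm⟩ := hα.exists_lt_apply_add_int_mul hcont hper hu2 x
  by_contra! hsmall
  have h₁ := hsmall (n + m) _ hs
  have h₂ := hsmall m _ hs
  rw [cocycle_add, cocycle_add, add_right_comm x] at h₁
  rw [abs_lt] at h₁ h₂
  linarith [h₁.2, h₂.1]

theorem zpow_apply_coe {α : ℝ} {f : ℝ → ℝ} {F : Torus1 → Torus1}
    (hF : ∀ x : ℝ, F x = f x) {T : Equiv.Perm Torus2}
    (hT : ∀ p : Torus2, T p = (p.1 + α, F p.1 + p.2)) (n : ℤ) (x y : ℝ) :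
    (T ^ n) ((x : Torus1), (y : Torus1)) =
      (((x + n * α : ℝ) : Torus1), ((y + cocycle α f n x : ℝ) : Torus1)) := by
  have h : Semiconj (fun p : ℝ × ℝ => ((p.1 : Torus1), (p.2 : Torus1))) (lift α f) T :=
    fun p => by simp [hT, hF, lift, add_comm]
  simpa [lift_zpow_apply] using (h.perm_zpow n (x, y)).symm

end SkewProduct

theorem dist_fst_le_dist {X Y : Type*} [PseudoMetricSpace X] [PseudoMetricSpace Y]
    (p q : X × Y) : dist p.1 q.1 ≤ dist p q :=
  (le_max_left _ _).trans_eq Prod.dist_eq.symm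

theorem RegProx.fst_eq {T : Equiv.Perm Torus2} {a : Torus1} (hT : ∀ p, (T p).1 = p.1 + a)
    {p q : Torus2} (h : RegProx T p q) : p.1 = q.1 := by
  have hsemi : Semiconj Prod.fst T (Equiv.addRight a) := hT
  have hiso (n : ℤ) (p q : Torus2) : dist p.1 q.1 ≤ dist ((T ^ n) p) ((T ^ n) q) := by
    refine le_of_eq_of_le ?_ (dist_fst_le_dist _ _)
    simp [hsemi.perm_zpow n p, hsemi.perm_zpow n q]
  by_contra hne
  have hd : 0 < dist p.1 q.1 := dist_pos.2 hne
  obtain ⟨p', hp', q', hq', n, hn⟩ := h (dist p.1 q.1 / 3) (by positivity)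
    _ (Metric.ball_mem_nhds p (ε := dist p.1 q.1 / 3) (by positivity))
    _ (Metric.ball_mem_nhds q (ε := dist p.1 q.1 / 3) (by positivity))
  have hp : dist p.1 p'.1 < dist p.1 q.1 / 3 :=
    ((dist_fst_le_dist _ _).trans_eq (dist_comm _ _)).trans_lt hp'
  have hq : dist q'.1 q.1 < dist p.1 q.1 / 3 := (dist_fst_le_dist _ _).trans_lt hq'
  linarith [dist_triangle4 p.1 p'.1 q'.1 q.1, hiso n p' q']

theorem AddCircle.dist_coe_le_abs_sub {p : ℝ} (a b : ℝ) :
    dist (a : AddCircle p) (b : AddCircle p) ≤ |a - b| := by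
  rw [dist_eq_norm, ← AddCircle.coe_sub]
  exact QuotientAddGroup.norm_mk_le_norm

theorem regProx_of_forall_one_le_abs_sub {α : ℝ} {c : ℤ → ℝ → ℝ} {T : Equiv.Perm Torus2}
    (hT : ∀ (n : ℤ) (x y : ℝ), (T ^ n) ((x : Torus1), (y : Torus1)) =
      (((x + n * α : ℝ) : Torus1), ((y + c n x : ℝ) : Torus1)))
    (hc : ∀ n, Continuous (c n))
    (hosc : ∀ (x r : ℝ), 0 < r → ∃ n : ℤ, ∃ s ∈ Ioc 0 r, 1 ≤ |c n (x + s) - c n x|)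
    (x y₁ y₂ : ℝ) : RegProx T (x, y₁) (x, y₂) := by
  intro ε hε U hU V hV
  obtain ⟨r, hr, hrV⟩ := Metric.mem_nhds_iff.1 hV
  obtain ⟨n, s, ⟨hs0, hsr⟩, hs⟩ := hosc x (min r ε / 2) (by positivity)
  obtain ⟨δ, ⟨hδ0, hδs⟩, hδ⟩ := exists_mem_Icc_coe_sub_eq (g := fun t => c n (x + t)) hs0.le
    ((hc n).comp (continuous_const_add x)).continuousOn (by simpa using hs) (y₁ - y₂ : ℝ)
  have hδr : |δ| < min r ε := by
    rw [abs_of_nonneg hδ0]; linarith [lt_min hr hε]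
  have hsnd : ((y₂ + c n (x + δ) : ℝ) : Torus1) = ((y₁ + c n x : ℝ) : Torus1) := by
    simp only [add_zero, AddCircle.coe_add, AddCircle.coe_sub, sub_eq_iff_eq_add'] at hδ ⊢
    rw [hδ]; abel
  refine ⟨((x : Torus1), (y₁ : Torus1)), mem_of_mem_nhds hU,
    (((x + δ : ℝ) : Torus1), (y₂ : Torus1)), hrV ?_, n, ?_⟩
  · rw [Metric.mem_ball, Prod.dist_eq, dist_self, max_eq_left dist_nonneg]
    refine (AddCircle.dist_coe_le_abs_sub _ _).trans_lt ?_
    rw [add_sub_cancel_left]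
    exact hδr.trans_le (min_le_left _ _)
  · rw [hT, hT, hsnd, Prod.dist_eq, dist_self, max_eq_left dist_nonneg]
    refine (AddCircle.dist_coe_le_abs_sub _ _).trans_lt ?_
    rw [add_right_comm, sub_add_cancel_left, abs_neg]
    exact hδr.trans_le (min_le_right _ _)

theorem stmt9 (l : ℤ) (hl : l ≠ 0) (α : ℝ) (hα : Irrational α)
    (f : ℝ → ℝ) (hf : Continuous f) (hfl : ∀ x : ℝ, f (x + 1) - f x = l)
    (F : Torus1 → Torus1) (hF : ∀ x : ℝ, F (x : Torus1) = ((f x : ℝ) : Torus1))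
    (T : Equiv.Perm Torus2)
    (hT : ∀ p : Torus2, T p = (p.1 + (α : Torus1), F p.1 + p.2)) :
    {pq : Torus2 × Torus2 | RegProx T pq.1 pq.2} =
      {pq : Torus2 × Torus2 | pq.1.1 = pq.2.1} := by
  ext ⟨⟨x₁, y₁⟩, ⟨x₂, y₂⟩⟩
  refine ⟨fun h => h.fst_eq fun p => by rw [hT], fun (h : x₁ = x₂) => ?_⟩
  obtain ⟨x, rfl⟩ := QuotientAddGroup.mk_surjective x₁
  obtain ⟨y₁, rfl⟩ := QuotientAddGroup.mk_surjective y₁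
  obtain ⟨y₂, rfl⟩ := QuotientAddGroup.mk_surjective y₂
  subst h
  exact regProx_of_forall_one_le_abs_sub (SkewProduct.zpow_apply_coe hF hT)
    (SkewProduct.continuous_cocycle α f hf)
    (fun x _ hr => SkewProduct.exists_one_le_abs_cocycle_sub hl hα hf hfl x hr) x y₁ y₂
end

section
/- Let f : ℝ → ℝ be continuous with f(x+1) - f(x) = l for all x, l a nonzero integer, α irrational; define T(x,y) = (x+α, f(x)+y) on 𝕋² and τ(x) = x+α on 𝕋¹. Then the projection π : 𝕋² → 𝕋¹, π(x,y) = x, is a factor map onto the maximal equicontinuous factor of (𝕋², T). -/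
open Function Filter Topology
open scoped UniformConvergence

section ExpandingMap

variable {X : Type*} [MetricSpace X] {g : X → X}

theorem dist_le_dist_iterate (hg : ∀ x y, dist x y ≤ dist (g x) (g y)) (n : ℕ) (x y : X) :
    dist x y ≤ dist (g^[n] x) (g^[n] y) := by
  induction n generalizing x y with
  | zero => rfl
  | succ n ih => exact (hg x y).trans (ih (g x) (g y))

variable [CompactSpace X]

theorem exists_iterate_succ_dist_lt (hg : ∀ x y, dist x y ≤ dist (g x) (g y)) (x : X)
    {ε : ℝ} (hε : 0 < ε) : ∃ k, dist (g^[k + 1] x) x < ε := by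
  obtain ⟨_, φ, hφ, hlim⟩ := CompactSpace.tendsto_subseq fun n => g^[n] x
  obtain ⟨N, hN⟩ := Metric.cauchySeq_iff'.1 hlim.cauchySeq ε hε
  obtain ⟨k, hk⟩ : ∃ k, φ (N + 1) = φ N + (k + 1) := Nat.exists_eq_add_of_lt (hφ N.lt_succ_self)
  refine ⟨k, ?_⟩
  calc dist (g^[k + 1] x) x
      ≤ dist (g^[φ N] (g^[k + 1] x)) (g^[φ N] x) := dist_le_dist_iterate hg _ _ _
    _ = dist (g^[φ (N + 1)] x) (g^[φ N] x) := by rw [← iterate_add_apply, hk]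
    _ < ε := hN (N + 1) N.le_succ

theorem isometry_of_dist_le_dist (hg : ∀ x y, dist x y ≤ dist (g x) (g y)) : Isometry g := by
  have hg₂ : ∀ p q : X × X, dist p q ≤ dist (Prod.map g g p) (Prod.map g g q) := fun p q =>
    max_le_max (hg _ _) (hg _ _)
  refine Isometry.of_dist_eq fun x y =>
    le_antisymm (le_of_forall_pos_lt_add fun ε hε => ?_) (hg x y)
  obtain ⟨k, hk⟩ := exists_iterate_succ_dist_lt hg₂ (x, y) (half_pos hε)
  rw [Prod.map_iterate, Prod.dist_eq, max_lt_iff] at hk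
  obtain ⟨hx, hy⟩ := hk
  simp only [Prod.map_fst, Prod.map_snd] at hx hy
  calc dist (g x) (g y) ≤ dist (g^[k + 1] x) (g^[k + 1] y) := dist_le_dist_iterate hg k _ _
    _ ≤ dist (g^[k + 1] x) x + dist x y + dist y (g^[k + 1] y) := dist_triangle4 _ _ _ _
    _ < dist x y + ε := by rw [dist_comm y]; linarith

theorem surjective_of_dist_le_dist (hg : ∀ x y, dist x y ≤ dist (g x) (g y)) : Surjective g := by
  have hclosed : IsClosed (Set.range g) :=
    (isCompact_range (isometry_of_dist_le_dist hg).continuous).isClosed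
  intro x
  refine hclosed.closure_subset (Metric.mem_closure_iff.2 fun ε hε => ?_)
  obtain ⟨k, hk⟩ := exists_iterate_succ_dist_lt hg x hε
  exact ⟨g^[k + 1] x, ⟨g^[k] x, (iterate_succ_apply' g k x).symm⟩, by rwa [dist_comm]⟩

theorem isometry_of_surjective_of_dist_le {f : X → X} (hf : Surjective f)
    (hle : ∀ x y, dist (f x) (f y) ≤ dist x y) : Isometry f := by
  have hfg : ∀ x, f (surjInv hf x) = x := surjInv_eq hf
  have hg : ∀ x y, dist x y ≤ dist (surjInv hf x) (surjInv hf y) := fun x y => by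
    simpa only [hfg] using hle (surjInv hf x) (surjInv hf y)
  refine Isometry.of_dist_eq fun x y => ?_
  obtain ⟨x, rfl⟩ := surjective_of_dist_le_dist hg x
  obtain ⟨y, rfl⟩ := surjective_of_dist_le_dist hg y
  rw [hfg, hfg, (isometry_of_dist_le_dist hg).dist_eq]

end ExpandingMap

section OrbitMap

variable {Y : Type*} [MetricSpace Y] [CompactSpace Y] {S : Y → Y}

/-- The sup metric of `ℕ →ᵤ Y` pulls back along `orbitMap S` to the orbit metric
`⨆ n, dist (S^[n] x) (S^[n] y)`. -/
def orbitMap (S : Y → Y) (y : Y) : ℕ →ᵤ Y := UniformFun.ofFun fun n => S^[n] y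

theorem dist_le_dist_orbitMap (x y : Y) : dist x y ≤ dist (orbitMap S x) (orbitMap S y) :=
  (UniformFun.dist_le (f := orbitMap S x) (g := orbitMap S y) dist_nonneg).1 le_rfl 0

theorem uniformContinuous_orbitMap (hS : Equicontinuous fun n => S^[n]) :
    UniformContinuous (orbitMap S) :=
  uniformEquicontinuous_iff_uniformContinuous.1
    (CompactSpace.uniformEquicontinuous_of_equicontinuous hS)

theorem dist_orbitMap_map (hS : Equicontinuous fun n => S^[n]) (hsurj : Surjective S) (x y : Y) :
    dist (orbitMap S (S x)) (orbitMap S (S y)) = dist (orbitMap S x) (orbitMap S y) := by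
  set K := Set.range (orbitMap S)
  have : CompactSpace K :=
    isCompact_iff_compactSpace.1 (isCompact_range (uniformContinuous_orbitMap hS).continuous)
  let shift : K → K := fun u => ⟨UniformFun.ofFun fun n => UniformFun.toFun u.1 (n + 1), by
    obtain ⟨y, hy⟩ := u.2
    exact ⟨S y, by rw [← hy]; rfl⟩⟩
  have hshift : ∀ y, shift ⟨orbitMap S y, y, rfl⟩ = ⟨orbitMap S (S y), S y, rfl⟩ := fun y => rfl
  have hshift_surj : Surjective shift := by
    rintro ⟨-, y, rfl⟩
    obtain ⟨x, rfl⟩ := hsurj y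
    exact ⟨_, hshift x⟩
  have hshift_le : ∀ u v, dist (shift u) (shift v) ≤ dist u v := fun u v =>
    (UniformFun.dist_le dist_nonneg).2 fun n => (UniformFun.dist_le dist_nonneg).1 le_rfl (n + 1)
  have := (isometry_of_surjective_of_dist_le hshift_surj hshift_le).dist_eq
    ⟨orbitMap S x, x, rfl⟩ ⟨orbitMap S y, y, rfl⟩
  rwa [hshift, hshift] at this

theorem dist_orbitMap_iterate (hS : Equicontinuous fun n => S^[n]) (hsurj : Surjective S)
    (n : ℕ) (x y : Y) :
    dist (orbitMap S (S^[n] x)) (orbitMap S (S^[n] y)) = dist (orbitMap S x) (orbitMap S y) := by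
  induction n generalizing x y with
  | zero => rfl
  | succ n ih => rw [iterate_succ_apply, iterate_succ_apply, ih, dist_orbitMap_map hS hsurj]

end OrbitMap

section RegionallyProximal

variable {X Y : Type*}

def RegionallyProximal [PseudoMetricSpace X] (T : X → X) (x y : X) : Prop :=
  ∀ ε > 0, ∃ x' y' : X, ∃ n : ℕ,
    dist x x' < ε ∧ dist y y' < ε ∧ dist (T^[n] x') (T^[n] y') < ε

theorem RegionallyProximal.map [PseudoMetricSpace X] [PseudoMetricSpace Y] {T : X → X}
    {S : Y → Y} {ψ : X → Y} (hψ : UniformContinuous ψ) (hψT : Semiconj ψ T S) {x y : X}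
    (h : RegionallyProximal T x y) : RegionallyProximal S (ψ x) (ψ y) := by
  intro ε hε
  obtain ⟨δ, hδ, hψδ⟩ := Metric.uniformContinuous_iff.1 hψ ε hε
  obtain ⟨x', y', n, hx, hy, hn⟩ := h δ hδ
  refine ⟨ψ x', ψ y', n, hψδ hx, hψδ hy, ?_⟩
  rw [← (hψT.iterate_right n).eq, ← (hψT.iterate_right n).eq]
  exact hψδ hn

theorem RegionallyProximal.eq_of_equicontinuous [MetricSpace Y] [CompactSpace Y] {S : Y → Y}
    (hS : Equicontinuous fun n => S^[n]) (hsurj : Surjective S) {x y : Y}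
    (h : RegionallyProximal S x y) : x = y := by
  refine eq_of_forall_dist_le fun ε hε => ?_
  obtain ⟨δ, hδ, hδε⟩ :=
    Metric.uniformContinuous_iff.1 (uniformContinuous_orbitMap hS) (ε / 3) (by positivity)
  obtain ⟨x', y', n, hx, hy, hn⟩ := h δ hδ
  have hxy' := hδε hn
  rw [dist_orbitMap_iterate hS hsurj] at hxy'
  have hxx' := hδε hx
  have hyy' := hδε hy
  calc dist x y ≤ dist (orbitMap S x) (orbitMap S y) := dist_le_dist_orbitMap x y
    _ ≤ dist (orbitMap S x) (orbitMap S x') + dist (orbitMap S x') (orbitMap S y') +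
        dist (orbitMap S y') (orbitMap S y) := dist_triangle4 _ _ _ _
    _ ≤ ε := by rw [dist_comm (orbitMap S y')]; linarith

end RegionallyProximal

section SkewProduct

theorem Continuous.birkhoffSum {X M : Type*} [TopologicalSpace X] [TopologicalSpace M]
    [AddCommMonoid M] [ContinuousAdd M] {f : X → X} {g : X → M} (hf : Continuous f)
    (hg : Continuous g) (n : ℕ) : Continuous (birkhoffSum f g n) :=
  continuous_finsetSum _ fun k _ => hg.comp (hf.iterate k)

theorem birkhoffSum_iterate_sub_birkhoffSum {α G : Type*} [AddCommGroup G] (f : α → α)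
    (g : α → G) (m n : ℕ) (x : α) :
    birkhoffSum f g n (f^[m] x) - birkhoffSum f g n x =
      birkhoffSum f g m (f^[n] x) - birkhoffSum f g m x := by
  rw [sub_eq_sub_iff_add_eq_add, add_comm, ← birkhoffSum_add, add_comm (birkhoffSum f g m _),
    ← birkhoffSum_add, add_comm]

def skewProduct {X A : Type*} [Add A] (f : X → X) (F : X → A) (p : X × A) : X × A :=
  (f p.1, F p.1 + p.2)

theorem skewProduct_iterate {X A : Type*} [AddCommMonoid A] (f : X → X) (F : X → A) (n : ℕ)
    (p : X × A) : (skewProduct f F)^[n] p = (f^[n] p.1, birkhoffSum f F n p.1 + p.2) := by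
  induction n with
  | zero => simp
  | succ n ih =>
    rw [iterate_succ_apply', ih, skewProduct, iterate_succ_apply', birkhoffSum_succ,
      add_comm _ (F _), add_assoc]

theorem skewProduct_surjective {X A : Type*} [AddGroup A] {f : X → X} (hf : Surjective f)
    (F : X → A) : Surjective (skewProduct f F) := by
  rintro ⟨u, v⟩
  obtain ⟨x, rfl⟩ := hf u
  exact ⟨(x, -F x + v), by simp [skewProduct]⟩

theorem equicontinuous_iterate_add_const {G : Type*} [SeminormedAddCommGroup G] (a : G) :
    Equicontinuous fun n : ℕ => (· + a)^[n] :=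
  (LipschitzWith.uniformEquicontinuous _ 1 fun n => by
    simpa only [add_right_iterate] using (isometry_add_right (n • a)).lipschitz).equicontinuous

theorem exists_pos_nsmul_norm_lt {G : Type*} [NormedAddCommGroup G] [CompactSpace G] (a : G)
    {ε : ℝ} (hε : 0 < ε) : ∃ q, 0 < q ∧ ‖q • a‖ < ε := by
  have := (mapClusterPt_zero_atTop_nsmul a).frequently (Metric.ball_mem_nhds 0 hε)
  obtain ⟨q, hq, hqa⟩ := Filter.frequently_atTop.1 this 1
  exact ⟨q, hq, mem_ball_zero_iff.1 hqa⟩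

theorem regionallyProximal_skewProduct_add {G B : Type*} [NormedAddCommGroup G] [CompactSpace G]
    [NormedAddCommGroup B] {a : G} (ha : DenseRange fun n : ℕ => n • a) {F : G → B}
    (hF : Continuous F) (hsurj : ∀ q, 0 < q → Surjective (birkhoffSum (· + a) F q))
    (u : G) (v w : B) : RegionallyProximal (skewProduct (· + a) F) (u, v) (u, v + w) := by
  intro ε hε
  obtain ⟨q, hq, hqa⟩ := exists_pos_nsmul_norm_lt a hε
  obtain ⟨z, hz⟩ := hsurj q hq (birkhoffSum (· + a) F q u - w)
  obtain ⟨ρ, hρ, hρε⟩ :=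
    Metric.continuous_iff.1 ((continuous_add_const a).birkhoffSum hF q) z ε hε
  obtain ⟨n, hn⟩ := ha.exists_dist_lt (z - u) hρ
  refine ⟨(u, v), (u + q • a, v + w), n, by simpa using hε, ?_, ?_⟩
  · simpa [Prod.dist_eq, dist_eq_norm] using hqa
  have hshift := birkhoffSum_iterate_sub_birkhoffSum (· + a) F q n u
  simp only [add_right_iterate] at hshift
  have hnz : dist (u + n • a) z < ρ := by
    rwa [dist_comm, dist_eq_norm, ← sub_sub, ← dist_eq_norm]
  have hfibre : birkhoffSum (· + a) F n u + v - (birkhoffSum (· + a) F n (u + q • a) + (v + w)) =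
      -(birkhoffSum (· + a) F q (u + n • a) - birkhoffSum (· + a) F q z) := by
    rw [sub_eq_iff_eq_add'.1 hshift, hz]
    abel
  rw [skewProduct_iterate, skewProduct_iterate, Prod.dist_eq, max_lt_iff]
  simp only [add_right_iterate]
  refine ⟨by rwa [add_right_comm, dist_self_add_right], ?_⟩
  rw [dist_eq_norm, hfibre, norm_neg, ← dist_eq_norm]
  exact hρε _ hnz

end SkewProduct

section CircleMap

theorem AddCircle.continuous_of_lift {p : ℝ} {F : AddCircle p → AddCircle p} {f : ℝ → ℝ}
    (hf : Continuous f) (hF : ∀ x : ℝ, F x = f x) : Continuous F :=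
  (QuotientAddGroup.isQuotientMap_mk _).continuous_iff.2 <| by
    rw [comp_def, funext hF]
    exact (AddCircle.continuous_mk' p).comp hf

theorem AddCircle.surjective_coe_comp_of_le_abs_sub {p : ℝ} [Fact (0 < p)] {g : ℝ → ℝ}
    (hg : Continuous g) (a b : ℝ) (h : p ≤ |g b - g a|) :
    Surjective fun x => (g x : AddCircle p) := by
  intro y
  have hy := (equivIco p (min (g a) (g b)) y).2
  have hy_mem : (equivIco p (min (g a) (g b)) y : ℝ) ∈ Set.uIcc (g a) (g b) := by
    have := max_sub_min_eq_abs (g a) (g b)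
    exact ⟨hy.1, by linarith [hy.2]⟩
  obtain ⟨x, -, hx⟩ := intermediate_value_uIcc hg.continuousOn hy_mem
  exact ⟨x, by simp only [hx, AddCircle.coe_equivIco]⟩

theorem birkhoffSum_add_right_add_one {f : ℝ → ℝ} {c : ℝ} (hf : ∀ x, f (x + 1) - f x = c)
    (α : ℝ) (q : ℕ) (x : ℝ) :
    birkhoffSum (· + α) f q (x + 1) = birkhoffSum (· + α) f q x + q * c := by
  have hstep : ∀ y, f (y + 1) = f y + c := fun y => by linarith [hf y]
  simp only [birkhoffSum, add_right_iterate, add_right_comm x 1, hstep, Finset.sum_add_distrib,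
    Finset.sum_const, Finset.card_range, nsmul_eq_mul]

theorem birkhoffSum_coe_of_lift {f : ℝ → ℝ} {F : Torus1 → Torus1} (hF : ∀ x : ℝ, F x = f x)
    (α : ℝ) (q : ℕ) (x : ℝ) :
    birkhoffSum (· + (α : Torus1)) F q x = ((birkhoffSum (· + α) f q x : ℝ) : Torus1) := by
  simp only [birkhoffSum, add_right_iterate, ← AddCircle.coe_nsmul, ← AddCircle.coe_add, hF]
  exact (map_sum (QuotientAddGroup.mk' (AddSubgroup.zmultiples (1 : ℝ))) _ _).symm

theorem surjective_birkhoffSum_of_lift {f : ℝ → ℝ} (hf : Continuous f) {l : ℤ} (hl : l ≠ 0)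
    (hfl : ∀ x, f (x + 1) - f x = l) {F : Torus1 → Torus1} (hF : ∀ x : ℝ, F x = f x)
    (α : ℝ) {q : ℕ} (hq : 0 < q) : Surjective (birkhoffSum (· + (α : Torus1)) F q) := by
  have hdeg : (1 : ℝ) ≤ |birkhoffSum (· + α) f q 1 - birkhoffSum (· + α) f q 0| := by
    have := birkhoffSum_add_right_add_one hfl α q 0
    rw [zero_add] at this
    rw [this, add_sub_cancel_left, abs_mul, Nat.abs_cast, ← Int.cast_abs]
    exact one_le_mul_of_one_le_of_one_le (Nat.one_le_cast.2 hq)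
      (by exact_mod_cast Int.one_le_abs hl)
  intro y
  obtain ⟨x, hx⟩ := AddCircle.surjective_coe_comp_of_le_abs_sub
    ((continuous_add_const α).birkhoffSum hf q) 0 1 hdeg y
  exact ⟨x, (birkhoffSum_coe_of_lift hF α q x).trans hx⟩

end CircleMap

theorem stmt10 (l : ℤ) (hl : l ≠ 0) (α : ℝ) (hα : Irrational α)
    (f : ℝ → ℝ) (hf : Continuous f) (hfl : ∀ x : ℝ, f (x + 1) - f x = l)
    (F : Torus1 → Torus1) (hF : ∀ x : ℝ, F (x : Torus1) = ((f x : ℝ) : Torus1))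
    (T : Torus2 → Torus2)
    (hT : ∀ p : Torus2, T p = (p.1 + (α : Torus1), F p.1 + p.2))
    (τ : Torus1 → Torus1) (hτ : ∀ x : Torus1, τ x = x + (α : Torus1))
    (π : Torus2 → Torus1) (hπ : ∀ p : Torus2, π p = p.1) :
    -- `π` is a factor map from `(𝕋², T)` onto the equicontinuous system `(𝕋¹, τ)` ...
    (Continuous π ∧ Function.Surjective π ∧ π ∘ T = τ ∘ π ∧
      Equicontinuous fun n : ℕ => τ^[n]) ∧
    -- ... and it is the *maximal* equicontinuous factor: every factor map from
    -- `(𝕋², T)` onto an equicontinuous system factors through `π`.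
    (∀ (Y : Type) (_ : MetricSpace Y) (_ : CompactSpace Y) (S : Y → Y) (ψ : Torus2 → Y),
      Continuous S → Continuous ψ → Function.Surjective ψ → ψ ∘ T = S ∘ ψ →
      (Equicontinuous fun n : ℕ => S^[n]) →
      ∃ θ : Torus1 → Y, Continuous θ ∧ ψ = θ ∘ π) := by
  obtain rfl : T = skewProduct (· + (α : Torus1)) F := funext hT
  obtain rfl : τ = (· + (α : Torus1)) := funext hτ
  obtain rfl : π = Prod.fst := funext hπ
  refine ⟨⟨continuous_fst, Prod.fst_surjective, rfl, equicontinuous_iterate_add_const _⟩, ?_⟩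
  intro Y _ _ S ψ _ hψ hψ_surj hψT hS
  have hS_surj : Surjective S :=
    .of_comp (hψT ▸ hψ_surj.comp (skewProduct_surjective (add_right_surjective _) F))
  have hdense : DenseRange fun n : ℕ => n • (α : Torus1) :=
    denseRange_zsmul_iff_nsmul.1 (AddCircle.denseRange_zsmul_coe_iff.2 (by rwa [div_one]))
  refine ⟨fun u => ψ (u, 0), hψ.comp (continuous_id.prodMk continuous_const), funext fun p => ?_⟩
  have hprox := regionallyProximal_skewProduct_add hdense (AddCircle.continuous_of_lift hf hF)
    (fun q hq => surjective_birkhoffSum_of_lift hf hl hfl hF α hq) p.1 0 p.2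
  rw [zero_add] at hprox
  exact ((hprox.map (CompactSpace.uniformContinuous_of_continuous hψ)
    (semiconj_iff_comp_eq.2 hψT)).eq_of_equicontinuous hS hS_surj).symm
end

section
/- Let α be irrational with liminf_{n→∞} n·|e^{2πinα} - 1| = 0. Define f(x) = lx + Σ_n a_n e^{2πinx}, where l is a nonzero integer, a_{±n_k} = e^{2πi n_k α} - 1 for a sequence n_k with n_k|e^{2πi n_k α}-1| < 1/k², and a_n = 0 otherwise. Then there is no pair (φ, c) with φ : ℝ → ℝ continuous, periodic with period 1, and c ∈ ℝ, such that f(x) = φ(x+α) - φ(x) + lx + c for all x ∈ ℝ. -/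
/-!
Write `S` for the trigonometric series in `f` and `ψ` for `φ` viewed as a complex function. The
hypothesis says `S x = ψ (x + α) - ψ x + c`, so at every frequency `n ≠ 0` the Fourier coefficients
on `[0, 1]` satisfy `Ŝ n = (e(nα) - 1) ψ̂ n`. Since `Σ ‖a_{n_k}‖ < ∞` the series may be integrated
termwise, giving `Ŝ (n_k) = e(n_k α) - 1`, which is nonzero because `α` is irrational. Hence
`ψ̂ (n_k) = 1` for all `k`, whereas Parseval's identity forces `ψ̂ (n) → 0`.
-/

open Complex Filter ComplexConjugate Topology MeasureTheory Function

theorem fourier_coe_ne_one_of_irrational {T : ℝ} [Fact (0 < T)] {α : ℝ}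
    (hα : Irrational (α / T)) {n : ℤ} (hn : n ≠ 0) : fourier n (α : AddCircle T) ≠ 1 := by
  intro h
  have hzero : n • (α : AddCircle T) = 0 := by
    apply AddCircle.injective_toCircle (Fact.out : 0 < T).ne'
    rw [AddCircle.toCircle_zero]
    exact Circle.ext h
  obtain ⟨q, hq⟩ := AddCircle.isOfFinAddOrder_iff_exists_rat_eq_div.mp
    (isOfFinAddOrder_iff_zsmul_eq_zero.mpr ⟨n, hn, hzero⟩)
  exact hα ⟨q, hq⟩

theorem summable_norm_of_mul_norm_lt {c : ℕ → ℂ} {m : ℕ → ℕ} (hm : ∀ k, 1 ≤ m k)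
    (hc : ∀ k, m k * ‖c k‖ < 1 / ((k : ℝ) + 1) ^ 2) : Summable (‖c ·‖) := by
  have hle : ∀ k, ‖c k‖ ≤ 1 / ((k : ℝ) + 1) ^ 2 := fun k =>
    calc ‖c k‖ ≤ m k * ‖c k‖ := le_mul_of_one_le_left (norm_nonneg _) (by exact_mod_cast hm k)
      _ ≤ 1 / ((k : ℝ) + 1) ^ 2 := (hc k).le
  refine Summable.of_nonneg_of_le (fun _ => norm_nonneg _) hle ?_
  exact_mod_cast (summable_nat_add_iff 1).mpr (Real.summable_one_div_nat_pow.mpr one_lt_two)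

section FourierCoeffOn

variable {E : Type*} [NormedAddCommGroup E] [NormedSpace ℂ E] {a b : ℝ} (hab : a < b)

theorem fourierCoeffOn_fourier (m n : ℤ) :
    fourierCoeffOn hab (fun x => fourier m (x : AddCircle (b - a))) n = if n = m then 1 else 0 := by
  have := Fact.mk (sub_pos.mpr hab)
  have hlift : AddCircle.liftIoc (b - a) a (fun x : ℝ => fourier m (x : AddCircle (b - a))) =
      fourier m := by
    ext z
    simp only [AddCircle.liftIoc, comp_apply, Set.domRestrict_apply, AddCircle.coe_equivIoc]
  rw [fourierCoeffOn, hlift, fourierCoeff_fourier, Pi.single_apply]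

theorem fourierCoeffOn_const [CompleteSpace E] (c : E) (n : ℤ) :
    fourierCoeffOn hab (fun _ => c) n = if n = 0 then c else 0 := by
  have h1 : fourierCoeffOn hab (fun _ => (1 : ℂ)) n = if n = 0 then 1 else 0 := by
    simpa only [fourier_zero] using fourierCoeffOn_fourier hab 0 n
  have hc : fourierCoeffOn hab (fun _ => c) n = fourierCoeffOn hab (fun _ => (1 : ℂ)) n • c := by
    simp only [fourierCoeffOn_eq_integral, smul_eq_mul, mul_one,
      intervalIntegral.integral_smul_const, smul_assoc]
  rw [hc, h1, ite_smul, one_smul, zero_smul]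

theorem fourierCoeffOn_add {f g : ℝ → E} (hf : IntervalIntegrable f volume a b)
    (hg : IntervalIntegrable g volume a b) (n : ℤ) :
    fourierCoeffOn hab (fun x => f x + g x) n =
      fourierCoeffOn hab f n + fourierCoeffOn hab g n := by
  have hc : ContinuousOn (fun x : ℝ => fourier (-n) (x : AddCircle (b - a))) (Set.uIcc a b) :=
    ((map_continuous _).comp (AddCircle.continuous_mk' _)).continuousOn
  simp only [fourierCoeffOn_eq_integral, smul_add]
  rw [intervalIntegral.integral_add (hf.continuousOn_smul hc) (hg.continuousOn_smul hc), smul_add]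

theorem fourierCoeffOn_comp_add_right {f : ℝ → E} (hf : Periodic f (b - a)) (c : ℝ) (n : ℤ) :
    fourierCoeffOn hab (fun x => f (x + c)) n =
      fourier n (c : AddCircle (b - a)) • fourierCoeffOn hab f n := by
  set g : ℝ → E := fun y => fourier (-n) (y : AddCircle (b - a)) • f y
  have hg : Periodic g (b - a) := fun y => by
    simp only [g, AddCircle.coe_add, AddCircle.coe_period, add_zero, hf y]
  have hshift : ∀ x : ℝ, fourier (-n) (x : AddCircle (b - a)) • f (x + c) =
      fourier n (c : AddCircle (b - a)) • g (x + c) := fun x => by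
    rw [← smul_assoc, smul_eq_mul]
    congr 1
    simp only [fourier_coe_apply, ← Complex.exp_add]
    congr 1
    push_cast
    ring
  rw [fourierCoeffOn_eq_integral, fourierCoeffOn_eq_integral, smul_comm]
  simp only [hshift, intervalIntegral.integral_smul, intervalIntegral.integral_comp_add_right g c]
  rw [show b + c = a + c + (b - a) by ring, hg.intervalIntegral_add_eq (a + c) a, add_sub_cancel]

theorem fourierCoeffOn_coboundary {ψ S : ℝ → ℂ} (hψ : Continuous ψ) (hper : Periodic ψ (b - a))
    (α : ℝ) (c : ℂ) (hS : ∀ x, S x = ψ (x + α) - ψ x + c) {n : ℤ} (hn : n ≠ 0) :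
    fourierCoeffOn hab S n = (fourier n (α : AddCircle (b - a)) - 1) * fourierCoeffOn hab ψ n := by
  have hScont : Continuous S := by
    rw [show S = fun x => ψ (x + α) - ψ x + c from funext hS]
    fun_prop
  have hsum : (fun x => S x + ψ x) = fun x => ψ (x + α) + c := funext fun x => by
    rw [hS]; ring
  have h := congrArg (fourierCoeffOn hab · n) hsum
  rw [fourierCoeffOn_add hab (hScont.intervalIntegrable _ _) (hψ.intervalIntegrable _ _),
    fourierCoeffOn_add hab (f := fun x => ψ (x + α))
      ((hψ.comp (continuous_add_const α)).intervalIntegrable _ _) intervalIntegrable_const,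
    fourierCoeffOn_comp_add_right hab hper, fourierCoeffOn_const, if_neg hn, add_zero,
    smul_eq_mul] at h
  linear_combination h

theorem hasSum_fourierCoeffOn_tsum [CompleteSpace E] {ι : Type*} [Countable ι] {F : ι → ℝ → E}
    (hF : ∀ i, Continuous (F i)) {C : ι → ℝ} (hC : Summable C) (hFC : ∀ i x, ‖F i x‖ ≤ C i)
    (n : ℤ) :
    HasSum (fun i => fourierCoeffOn hab (F i) n)
      (fourierCoeffOn hab (fun x => ∑' i, F i x) n) := by
  have hc : Continuous (fun x : ℝ => fourier (-n) (x : AddCircle (b - a))) :=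
    (map_continuous _).comp (AddCircle.continuous_mk' _)
  simp only [fourierCoeffOn_eq_integral]
  refine HasSum.const_smul _ (intervalIntegral.hasSum_integral_of_dominated_convergence
    (fun i _ => C i) (fun i => (hc.smul (hF i)).aestronglyMeasurable) ?_ ?_ ?_ ?_)
  · exact fun i => ae_of_all _ fun x _ => by
      rw [norm_smul, fourier_apply, Circle.norm_coe, one_mul]; exact hFC i x
  · exact ae_of_all _ fun _ _ => hC
  · exact intervalIntegrable_const
  · exact ae_of_all _ fun x _ =>
      ((hC.of_norm_bounded (fun i => hFC i x)).hasSum).const_smul _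

theorem fourierCoeffOn_ofReal_two_mul_re (w : ℂ) (m n : ℤ) :
    fourierCoeffOn hab (fun x => ((2 * (w * fourier m (x : AddCircle (b - a))).re : ℝ) : ℂ)) n =
      (if n = m then w else 0) + (if n = -m then conj w else 0) := by
  have hsplit : (fun x : ℝ => ((2 * (w * fourier m (x : AddCircle (b - a))).re : ℝ) : ℂ)) =
      fun x : ℝ => w * fourier m (x : AddCircle (b - a)) +
        conj w * fourier (-m) (x : AddCircle (b - a)) := by
    ext x
    rw [← Complex.add_conj, map_mul, fourier_neg]
  have hint : ∀ (c : ℂ) (k : ℤ), IntervalIntegrable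
      (fun x : ℝ => c * fourier k (x : AddCircle (b - a))) volume a b := fun c k =>
    (continuous_const.mul ((map_continuous _).comp (AddCircle.continuous_mk' _))).intervalIntegrable
      _ _
  rw [hsplit, fourierCoeffOn_add hab (hint w m) (hint (conj w) (-m)), fourierCoeffOn.const_mul,
    fourierCoeffOn.const_mul, fourierCoeffOn_fourier, fourierCoeffOn_fourier, mul_ite, mul_ite,
    mul_one, mul_one, mul_zero, mul_zero]

theorem fourierCoeffOn_tsum_two_mul_re {c : ℕ → ℂ} (hc : Summable (‖c ·‖)) {m : ℕ → ℤ}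
    (hm : Injective m) (hpos : ∀ k, 0 < m k) (j : ℕ) :
    fourierCoeffOn hab (fun x =>
      ((∑' k, 2 * (c k * fourier (m k) (x : AddCircle (b - a))).re : ℝ) : ℂ)) (m j) = c j := by
  set F : ℕ → ℝ → ℂ := fun k x => ((2 * (c k * fourier (m k) (x : AddCircle (b - a))).re : ℝ) : ℂ)
  have hF : ∀ k, Continuous (F k) := fun k => by
    have := (map_continuous (fourier (m k))).comp (AddCircle.continuous_mk' (b - a))
    fun_prop
  have hFC : ∀ k x, ‖F k x‖ ≤ 2 * ‖c k‖ := fun k x => by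
    simp only [F, Complex.norm_real, norm_mul, Real.norm_ofNat]
    gcongr
    calc ‖(c k * fourier (m k) (x : AddCircle (b - a))).re‖
        ≤ ‖c k * fourier (m k) (x : AddCircle (b - a))‖ := Complex.abs_re_le_norm _
      _ = ‖c k‖ := by rw [norm_mul, fourier_apply, Circle.norm_coe, mul_one]
  have hterm : ∀ k, fourierCoeffOn hab (F k) (m j) = if k = j then c j else 0 := fun k => by
    have hne : m j ≠ -m k := by linarith [hpos j, hpos k]
    rw [fourierCoeffOn_ofReal_two_mul_re, if_neg hne, add_zero]
    by_cases hkj : k = j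
    · simp [hkj]
    · rw [if_neg (hm.ne (Ne.symm hkj)), if_neg hkj]
  have hsum := hasSum_fourierCoeffOn_tsum hab hF (hc.mul_left 2) hFC (m j)
  simp only [hterm] at hsum
  simp only [Complex.ofReal_tsum]
  exact hsum.unique (hasSum_ite_eq j (c j))

theorem tendsto_fourierCoeffOn_cofinite {f : ℝ → ℂ}
    (hf : MemLp f 2 (volume.restrict (Set.Ioc a b))) :
    Tendsto (fourierCoeffOn hab f) cofinite (𝓝 0) := by
  have hsq := (hasSum_sq_fourierCoeffOn hab hf).summable.tendsto_cofinite_zero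
  rw [tendsto_zero_iff_norm_tendsto_zero]
  simpa using hsq.sqrt.congr fun n => Real.sqrt_sq (norm_nonneg _)

theorem Continuous.tendsto_fourierCoeffOn_comp {f : ℝ → ℂ} (hf : Continuous f) {m : ℕ → ℤ}
    (hm : Injective m) : Tendsto (fun j => fourierCoeffOn hab f (m j)) atTop (𝓝 0) := by
  obtain ⟨C, hC⟩ := isCompact_Icc.exists_bound_of_continuousOn (hf.continuousOn (s := Set.Icc a b))
  have hL2 : MemLp f 2 (volume.restrict (Set.Ioc a b)) := MemLp.of_bound hf.aestronglyMeasurable C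
    (ae_restrict_of_forall_mem measurableSet_Ioc fun x hx => hC x (Set.Ioc_subset_Icc_self hx))
  rw [← Nat.cofinite_eq_atTop]
  exact (tendsto_fourierCoeffOn_cofinite hab hL2).comp hm.tendsto_cofinite

end FourierCoeffOn

theorem stmt12_general (α : ℝ) (hα : Irrational α)
    (l : ℤ)
    (nk : ℕ → ℕ) (hmono : StrictMono nk) (hpos : ∀ k, 1 ≤ nk k)
    (hnk : ∀ k : ℕ, (nk k : ℝ) *
      ‖Complex.exp (2 * Real.pi * I * (nk k) * α) - 1‖ < 1 / ((k : ℝ) + 1) ^ 2)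
    (f : ℝ → ℝ)
    (hf : ∀ x : ℝ, f x = l * x + ∑' k : ℕ,
      (2 * ((Complex.exp (2 * Real.pi * I * (nk k) * α) - 1) *
        Complex.exp (2 * Real.pi * I * (nk k) * x)).re)) :
    ¬ ∃ (φ : ℝ → ℝ) (c : ℝ), Continuous φ ∧ (∀ x : ℝ, φ (x + 1) = φ x) ∧
      ∀ x : ℝ, f x = φ (x + α) - φ x + l * x + c := by
  rintro ⟨φ, c, hφ, hper, heq⟩
  -- `fourierCoeffOn` on `[0, 1]` is phrased with the characters of `AddCircle (1 - 0)`.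
  have : Fact ((0 : ℝ) < 1 - 0) := ⟨by norm_num⟩
  have hexp : ∀ (n : ℕ) (x : ℝ),
      cexp (2 * Real.pi * I * n * x) = fourier (n : ℤ) (x : AddCircle ((1 : ℝ) - 0)) :=
    fun n x => by rw [fourier_coe_apply]; simp
  simp only [hexp] at hnk hf
  set a : ℕ → ℂ := fun k => fourier (nk k : ℤ) (α : AddCircle ((1 : ℝ) - 0)) - 1
  have hinj : Injective fun k => (nk k : ℤ) := Nat.cast_injective.comp hmono.injective
  have hnk_pos : ∀ k, 0 < (nk k : ℤ) := fun k => by have := hpos k; omega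
  have hS : ∀ x : ℝ,
      ((∑' k, 2 * (a k * fourier (nk k : ℤ) (x : AddCircle ((1 : ℝ) - 0))).re : ℝ) : ℂ) =
        φ (x + α) - φ x + c := fun x => by
    norm_cast
    linarith [hf x, heq x]
  have hcoeff : ∀ j, fourierCoeffOn zero_lt_one (fun x => (φ x : ℂ)) (nk j) = 1 := fun j => by
    have hcob := fourierCoeffOn_coboundary zero_lt_one (ψ := fun x => (φ x : ℂ)) (by fun_prop)
      (by simpa using hper) α c hS (n := nk j) (hnk_pos j).ne'
    rw [fourierCoeffOn_tsum_two_mul_re zero_lt_one (summable_norm_of_mul_norm_lt hpos hnk) hinj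
      hnk_pos] at hcob
    have ha : a j ≠ 0 := sub_ne_zero.mpr
      (fourier_coe_ne_one_of_irrational (by simpa using hα) (hnk_pos j).ne')
    exact (mul_eq_left₀ ha).mp hcob.symm
  have hlim := (show Continuous fun x => (φ x : ℂ) by fun_prop).tendsto_fourierCoeffOn_comp
    zero_lt_one hinj
  simp only [hcoeff] at hlim
  exact one_ne_zero (tendsto_const_nhds_iff.mp hlim)

theorem stmt12 (α : ℝ) (hα : Irrational α)
    (hliminf : Filter.liminf
      (fun n : ℕ => (n : ℝ) * ‖Complex.exp (2 * Real.pi * I * n * α) - 1‖)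
      Filter.atTop = 0)
    (l : ℤ) (hl : l ≠ 0)
    (nk : ℕ → ℕ) (hmono : StrictMono nk) (hpos : ∀ k, 1 ≤ nk k)
    (hnk : ∀ k : ℕ, (nk k : ℝ) *
      ‖Complex.exp (2 * Real.pi * I * (nk k) * α) - 1‖ < 1 / ((k : ℝ) + 1) ^ 2)
    (f : ℝ → ℝ)
    (hf : ∀ x : ℝ, f x = l * x + ∑' k : ℕ,
      (2 * ((Complex.exp (2 * Real.pi * I * (nk k) * α) - 1) *
        Complex.exp (2 * Real.pi * I * (nk k) * x)).re)) :
    ¬ ∃ (φ : ℝ → ℝ) (c : ℝ), Continuous φ ∧ (∀ x : ℝ, φ (x + 1) = φ x) ∧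
      ∀ x : ℝ, f x = φ (x + α) - φ x + l * x + c :=
  stmt12_general α hα l nk hmono hpos hnk f hf
end
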